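/- arXiv:2001.11712 — 14 statements merged into one kernel-verified Lean document; each statement's English description precedes it below -/
import Mathlib

section
/- If A is an N×k array that is a (1̄,t)-locating array with column alphabet sizes 2≤v₁≤v₂≤⋯≤v_{k−t} and 2v_{k−t}≤v_{k−t+1}≤⋯≤v_k, then N ≥ ∏_{i=k−t+1}^{k} v_i. -/
open Finset

/-- The set of rows of array `A` containing the interaction `(I, σ)`. -/
def rowsOf {R ι : Type*} [Fintype R] [DecidableEq ι] (A : R → ι → ℕ)
    (I : Finset ι) (σ : ι → ℕ) : Finset R :=
  Finset.univ.filter fun r => ∀ i ∈ I, A r i = σ i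

/-- `(I, σ)` is a `t`-way interaction for alphabet sizes `v`. -/
def isInter {ι : Type*} (v : ι → ℕ) (t : ℕ) (I : Finset ι) (σ : ι → ℕ) : Prop :=
  I.card = t ∧ ∀ i ∈ I, σ i < v i

/-- Mixed covering array of strength `t`: every `t`-way interaction appears in some row. -/
def isMCA {R ι : Type*} [Fintype R] [DecidableEq ι] (A : R → ι → ℕ) (v : ι → ℕ) (t : ℕ) : Prop :=
  ∀ I σ, isInter v t I σ → (rowsOf A I σ).Nonempty

/-- `(1,t)`-locating: distinct `t`-way interactions have distinct row supports. -/
def isLocating {R ι : Type*} [Fintype R] [DecidableEq ι] (A : R → ι → ℕ) (v : ι → ℕ) (t : ℕ) : Prop :=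
  ∀ I₁ σ₁ I₂ σ₂, isInter v t I₁ σ₁ → isInter v t I₂ σ₂ →
    rowsOf A I₁ σ₁ = rowsOf A I₂ σ₂ → I₁ = I₂ ∧ ∀ i ∈ I₁, σ₁ i = σ₂ i

/-- `(1̄,t)`-locating array: an MCA which is `(1,t)`-locating. -/
def isLA {R ι : Type*} [Fintype R] [DecidableEq ι] (A : R → ι → ℕ) (v : ι → ℕ) (t : ℕ) : Prop :=
  isMCA A v t ∧ isLocating A v t

/-- The last `t` columns (0-based indices `≥ k - t`). -/
def lastCols (k t : ℕ) : Finset (Fin k) :=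
  Finset.univ.filter fun i => k - t ≤ (i : ℕ)

theorem card_lastCols {k t : ℕ} (ht : t ≤ k) : #(lastCols k t) = t := by
  have : (lastCols k t).map Fin.valEmbedding = Ico (k - t) k := by
    ext x
    simp only [lastCols, mem_map, mem_filter, mem_univ, true_and, Fin.valEmbedding_apply, mem_Ico]
    exact ⟨fun ⟨i, hi, hx⟩ => hx ▸ ⟨hi, i.isLt⟩, fun ⟨hx, hxk⟩ => ⟨⟨x, hxk⟩, hx, rfl⟩⟩
  rw [← card_map, this, Nat.card_Ico]
  omega

/-- Restricting rows to the columns `I` maps the rows onto the assignments in `∏ i ∈ I, [0, v i)`. -/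
theorem prod_le_card_of_forall_rowsOf_nonempty {R ι : Type*} [Fintype R] [DecidableEq ι]
    (A : R → ι → ℕ) (v : ι → ℕ) (I : Finset ι)
    (hcov : ∀ σ : ι → ℕ, (∀ i ∈ I, σ i < v i) → (rowsOf A I σ).Nonempty) :
    ∏ i ∈ I, v i ≤ Fintype.card R := by
  have hsurj : Set.SurjOn (fun r (i : ι) (_ : i ∈ I) => A r i) (univ : Finset R)
      (I.pi fun i => range (v i)) := by
    intro τ hτ
    rw [mem_coe, mem_pi] at hτ
    obtain ⟨r, hr⟩ := hcov (fun i => if h : i ∈ I then τ i h else 0) fun i hi => by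
      simpa [hi] using hτ i hi
    simp only [rowsOf, mem_filter] at hr
    exact ⟨r, mem_coe.2 (mem_univ r), funext₂ fun i hi => by simpa [hi] using hr.2 i hi⟩
  calc ∏ i ∈ I, v i = #(I.pi fun i => range (v i)) := by simp [card_pi]
    _ ≤ #(univ : Finset R) := card_le_card_of_surjOn _ hsurj
    _ = Fintype.card R := card_univ

theorem isMCA.prod_le_card {R ι : Type*} [Fintype R] [DecidableEq ι] {A : R → ι → ℕ}
    {v : ι → ℕ} {t : ℕ} (hA : isMCA A v t) {I : Finset ι} (hI : #I = t) :
    ∏ i ∈ I, v i ≤ Fintype.card R :=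
  prod_le_card_of_forall_rowsOf_nonempty A v I fun σ hσ => hA I σ ⟨hI, hσ⟩

theorem stmt_1_general {N k t : ℕ} (ht : t < k) (v : Fin k → ℕ)
    (A : Fin N → Fin k → ℕ) (hLA : isLA A v t) :
    ∏ i ∈ lastCols k t, v i ≤ N := by
  simpa using hLA.1.prod_le_card (card_lastCols ht.le)

/-- Lower bound: if the first `k - t` sizes are at least 2 and nondecreasing, and the last `t`
sizes are nondecreasing and at least twice the earlier ones, then any `(1-bar,t)`-locating
array has at least `∏_{i=k-t+1}^k v_i` rows. -/
theorem stmt_1 {N k t : ℕ} (ht : t < k) (v : Fin k → ℕ) (h2 : ∀ i, 2 ≤ v i)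
    (hmono : Monotone v)
    (hjump : ∀ i j : Fin k, (i : ℕ) < k - t → k - t ≤ (j : ℕ) → 2 * v i ≤ v j)
    (A : Fin N → Fin k → ℕ) (hA : ∀ r j, A r j < v j) (hLA : isLA A v t) :
    ∏ i ∈ lastCols k t, v i ≤ N :=
  stmt_1_general ht v A hLA
end

section
/- Let A be a (1̄,t)-locating array with N rows, k columns, alphabet sizes 2≤v₁≤⋯≤v_k, and suppose v_i=v_{i+1}=⋯=v_{k−t}=v_{k−t+1} for some i∈{1,…,k−t}. Then N ≥ ⌈ 2·(∑_{i≤j₁<⋯<j_t≤k} ∏_{s=1}^{t} v_{j_s}) / (1 + C(k−i+1,t)) ⌉. -/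
open Finset

/-!
Fix a set `S` of columns and let `T` be the number of `t`-way interactions supported in `S`.
For each of the `C(|S|, t)` column sets, every row covers exactly one interaction on it, so the
supports of the `T` interactions have total size `C(|S|, t) · N`. Each support is nonempty, and
by the locating property the supports of size one are distinct singletons, so there are at most
`N` of them. Hence `2 T ≤ C(|S|, t) · N + N`.
-/

section LocatingArrayBound

variable {R ι : Type*} [Fintype ι] [DecidableEq ι]

/-- The interactions on the columns `J`, each encoded by its unique value vector that vanishes
off `J`. -/
def interactionsOn (v : ι → ℕ) (J : Finset ι) : Finset (ι → ℕ) :=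
  Fintype.piFinset fun j => range (if j ∈ J then v j else 1)

lemma mem_interactionsOn {v : ι → ℕ} {J : Finset ι} {σ : ι → ℕ} :
    σ ∈ interactionsOn v J ↔ ∀ j, σ j < if j ∈ J then v j else 1 := by
  simp [interactionsOn]

lemma card_interactionsOn (v : ι → ℕ) (J : Finset ι) :
    #(interactionsOn v J) = ∏ j ∈ J, v j := by
  simp only [interactionsOn, Fintype.card_piFinset, card_range]
  rw [prod_ite_mem univ J v, univ_inter]

lemma isInter_of_mem_interactionsOn {v : ι → ℕ} {t : ℕ} {J : Finset ι} {σ : ι → ℕ}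
    (hJ : #J = t) (hσ : σ ∈ interactionsOn v J) : isInter v t J σ :=
  ⟨hJ, fun j hj => by simpa [hj] using mem_interactionsOn.mp hσ j⟩

lemma eq_of_mem_interactionsOn {v : ι → ℕ} {J : Finset ι} {σ τ : ι → ℕ}
    (hσ : σ ∈ interactionsOn v J) (hτ : τ ∈ interactionsOn v J) (h : ∀ j ∈ J, σ j = τ j) :
    σ = τ := by
  funext j
  by_cases hj : j ∈ J
  · exact h j hj
  · have hσj := mem_interactionsOn.mp hσ j
    have hτj := mem_interactionsOn.mp hτ j
    simp only [hj, if_false, Nat.lt_one_iff] at hσj hτj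
    rw [hσj, hτj]

def rowPattern (A : R → ι → ℕ) (J : Finset ι) (r : R) : ι → ℕ :=
  fun j => if j ∈ J then A r j else 0

lemma rowPattern_mem_interactionsOn {A : R → ι → ℕ} {v : ι → ℕ} (hA : ∀ r j, A r j < v j)
    (J : Finset ι) (r : R) : rowPattern A J r ∈ interactionsOn v J :=
  mem_interactionsOn.mpr fun j => by by_cases hj : j ∈ J <;> simp [rowPattern, hj, hA]

lemma sum_card_rowsOf_interactionsOn [Fintype R] {A : R → ι → ℕ} {v : ι → ℕ}
    (hA : ∀ r j, A r j < v j) (J : Finset ι) :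
    ∑ σ ∈ interactionsOn v J, #(rowsOf A J σ) = Fintype.card R := by
  rw [← card_univ, card_eq_sum_card_fiberwise
    (fun r _ => rowPattern_mem_interactionsOn (v := v) hA J r)]
  refine sum_congr rfl fun σ hσ => congrArg card <| ext fun r => ?_
  simp only [rowsOf, mem_filter, mem_univ, true_and]
  refine ⟨fun h => ?_, fun h i hi => by simp [← h, rowPattern, hi]⟩
  exact eq_of_mem_interactionsOn (rowPattern_mem_interactionsOn hA J r) hσ
    fun j hj => by simp [rowPattern, hj, h j hj]

def interactions (v : ι → ℕ) (S : Finset ι) (t : ℕ) : Finset (Σ _ : Finset ι, ι → ℕ) :=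
  (S.powersetCard t).sigma (interactionsOn v)

lemma card_interactions (v : ι → ℕ) (S : Finset ι) (t : ℕ) :
    #(interactions v S t) = ∑ J ∈ S.powersetCard t, ∏ j ∈ J, v j := by
  rw [interactions, card_sigma]
  exact sum_congr rfl fun J _ => card_interactionsOn v J

lemma isInter_of_mem_interactions {v : ι → ℕ} {S : Finset ι} {t : ℕ}
    {p : Σ _ : Finset ι, ι → ℕ} (hp : p ∈ interactions v S t) : isInter v t p.1 p.2 :=
  have hp := mem_sigma.mp hp
  isInter_of_mem_interactionsOn (mem_powersetCard.mp hp.1).2 hp.2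

lemma sum_card_rowsOf_interactions [Fintype R] {A : R → ι → ℕ} {v : ι → ℕ}
    (hA : ∀ r j, A r j < v j) (S : Finset ι) (t : ℕ) :
    ∑ p ∈ interactions v S t, #(rowsOf A p.1 p.2) = (#S).choose t * Fintype.card R := by
  rw [interactions, sum_sigma, sum_congr rfl fun J _ => sum_card_rowsOf_interactionsOn hA J,
    sum_const, card_powersetCard, smul_eq_mul]

lemma injOn_rowsOf_interactions [Fintype R] {A : R → ι → ℕ} {v : ι → ℕ} {t : ℕ}
    (hLoc : isLocating A v t) (S : Finset ι) :
    Set.InjOn (fun p : Σ _ : Finset ι, ι → ℕ => rowsOf A p.1 p.2) (interactions v S t) := by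
  intro p hp q hq hpq
  obtain ⟨hJ, hσ⟩ := hLoc _ _ _ _ (isInter_of_mem_interactions hp)
    (isInter_of_mem_interactions hq) hpq
  have hp' := (mem_sigma.mp hp).2
  have hq' := (mem_sigma.mp hq).2
  rw [← hJ] at hq'
  exact Sigma.ext hJ (heq_of_eq (eq_of_mem_interactionsOn hp' hq' hσ))

/-- Distinct interactions covered by a single row are covered by distinct rows. -/
lemma card_filter_card_rowsOf_eq_one_le [Fintype R] {A : R → ι → ℕ} {v : ι → ℕ} {t : ℕ}
    (hLoc : isLocating A v t) (S : Finset ι) :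
    #{p ∈ interactions v S t | #(rowsOf A p.1 p.2) = 1} ≤ Fintype.card R := by
  have hinj := (injOn_rowsOf_interactions hLoc S).mono
    (coe_subset.mpr (filter_subset (fun p => #(rowsOf A p.1 p.2) = 1) (interactions v S t)))
  refine (card_le_card_of_injOn (t := univ.map ⟨singleton, singleton_injective⟩) _
    (fun p hp => ?_) hinj).trans_eq (by rw [card_map, card_univ])
  obtain ⟨r, hr⟩ := card_eq_one.mp (mem_filter.mp hp).2
  exact mem_map.mpr ⟨r, mem_univ r, hr.symm⟩

lemma two_mul_card_le_sum_add_card_filter_eq_one {α : Type*} {s : Finset α} {f : α → ℕ}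
    (hf : ∀ a ∈ s, 1 ≤ f a) : 2 * #s ≤ ∑ a ∈ s, f a + #{a ∈ s | f a = 1} := by
  rw [card_filter, ← sum_add_distrib, mul_comm, ← smul_eq_mul, ← sum_const]
  refine sum_le_sum fun a ha => ?_
  have := hf a ha
  split_ifs <;> omega

theorem isLA.two_mul_sum_prod_le [Fintype R] {A : R → ι → ℕ} {v : ι → ℕ} {t : ℕ}
    (hA : ∀ r j, A r j < v j) (hLA : isLA A v t) (S : Finset ι) :
    2 * ∑ J ∈ S.powersetCard t, ∏ j ∈ J, v j ≤ (1 + (#S).choose t) * Fintype.card R := by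
  obtain ⟨hMCA, hLoc⟩ := hLA
  rw [← card_interactions]
  calc 2 * #(interactions v S t)
      ≤ ∑ p ∈ interactions v S t, #(rowsOf A p.1 p.2)
          + #{p ∈ interactions v S t | #(rowsOf A p.1 p.2) = 1} :=
        two_mul_card_le_sum_add_card_filter_eq_one fun p hp =>
          (hMCA _ _ (isInter_of_mem_interactions hp)).card_pos
    _ ≤ (#S).choose t * Fintype.card R + Fintype.card R := by
        rw [sum_card_rowsOf_interactions hA]
        exact Nat.add_le_add_left (card_filter_card_rowsOf_eq_one_le hLoc S) _
    _ = (1 + (#S).choose t) * Fintype.card R := by ring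

end LocatingArrayBound

theorem stmt_2_general {N k t : ℕ} (i₀ : ℕ)
    (v : Fin k → ℕ)
    (A : Fin N → Fin k → ℕ) (hA : ∀ r j, A r j < v j) (hLA : isLA A v t) :
    (2 * ∑ J ∈ (Finset.univ.filter fun i : Fin k => i₀ - 1 ≤ (i : ℕ)).powersetCard t,
        ∏ j ∈ J, v j + (k - i₀ + 1).choose t) / (1 + (k - i₀ + 1).choose t) ≤ N := by
  have hS : #{i : Fin k | i₀ - 1 ≤ (i : ℕ)} ≤ k - i₀ + 1 := by
    have hsplit := card_filter_add_card_filter_not (s := univ) fun i : Fin k => i₀ - 1 ≤ (i : ℕ)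
    simp only [not_le, Fin.card_filter_val_lt, card_univ, Fintype.card_fin] at hsplit
    omega
  have hbound := hLA.two_mul_sum_prod_le hA {i : Fin k | i₀ - 1 ≤ (i : ℕ)}
  rw [Fintype.card_fin] at hbound
  rw [Nat.div_le_iff_le_mul_add_pred (by omega), Nat.add_sub_cancel_left]
  refine Nat.add_le_add_right (hbound.trans ?_) _
  gcongr

/-- Lower bound when `v` is constant on 1-based positions `i₀, …, k-t+1` with `1 ≤ i₀ ≤ k-t`:
`N` is at least the ceiling of `2 Σ ∏ / (1 + (k-i₀+1).choose t)`, where the sum is over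
`t`-subsets of the columns with 1-based index at least `i₀`. -/
theorem stmt_2 {N k t : ℕ} (ht : t < k) (i₀ : ℕ) (hi1 : 1 ≤ i₀) (hi2 : i₀ ≤ k - t)
    (v : Fin k → ℕ) (h2 : ∀ i, 2 ≤ v i) (hmono : Monotone v)
    (hconst : ∀ p q : Fin k, i₀ - 1 ≤ (p : ℕ) → (p : ℕ) ≤ k - t →
      i₀ - 1 ≤ (q : ℕ) → (q : ℕ) ≤ k - t → v p = v q)
    (A : Fin N → Fin k → ℕ) (hA : ∀ r j, A r j < v j) (hLA : isLA A v t) :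
    (2 * ∑ J ∈ (Finset.univ.filter fun i : Fin k => i₀ - 1 ≤ (i : ℕ)).powersetCard t,
        ∏ j ∈ J, v j + (k - i₀ + 1).choose t) / (1 + (k - i₀ + 1).choose t) ≤ N :=
  stmt_2_general i₀ v A hA hLA
end

section
/- For any (1,t)-locating array of strength t with N rows, k columns, and uniform alphabet size v, we have N ≥ ⌈ 2·C(k,t)·v^t / (1 + C(k,t)) ⌉. -/
open Finset

/-- Lower bound for uniform-alphabet `(1,t)`-locating arrays (which are also covering arrays):
`N` is at least the ceiling of `2 * (k.choose t) * v^t / (1 + k.choose t)`. -/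
theorem stmt_3 {N k t v : ℕ} (ht : t < k)
    (A : Fin N → Fin k → ℕ) (hA : ∀ r j, A r j < v)
    (hLA : isLA A (fun _ : Fin k => v) t) :
    (2 * (k.choose t) * v ^ t + k.choose t) / (1 + k.choose t) ≤ N := by
  classical
  obtain ⟨hMCA, hLoc⟩ := hLA
  set n := k.choose t with hn
  -- canonical symbol function from a pair (I, f)
  let ext : (Σ I : Finset (Fin k), (I → Fin v)) → (Fin k → ℕ) :=
    fun x i => if h : i ∈ x.1 then (x.2 ⟨i, h⟩ : ℕ) else 0
  -- index set of all t-way interactions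
  let 𝓘 : Finset (Σ I : Finset (Fin k), (I → Fin v)) :=
    (Finset.univ.powersetCard t).sigma (fun _ => Finset.univ)
  have hmem : ∀ x : (Σ I : Finset (Fin k), (I → Fin v)), x ∈ 𝓘 ↔ x.1.card = t := by
    intro x
    simp [𝓘, Finset.mem_sigma, Finset.mem_powersetCard_univ]
  have hinter : ∀ x ∈ 𝓘, isInter (fun _ : Fin k => v) t x.1 (ext x) := by
    intro x hx
    refine ⟨(hmem x).1 hx, fun i hi => ?_⟩
    simp only [ext, dif_pos hi]
    exact (x.2 ⟨i, hi⟩).isLt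
  -- cardinality of the interaction index set
  have hcard𝓘 : 𝓘.card = n * v ^ t := by
    rw [Finset.card_sigma]
    have : ∀ I ∈ (Finset.univ : Finset (Fin k)).powersetCard t,
        (Finset.univ : Finset (↥I → Fin v)).card = v ^ t := by
      intro I hI
      rw [Finset.card_univ, Fintype.card_fun, Fintype.card_fin, Fintype.card_coe,
        (Finset.mem_powersetCard_univ.mp hI)]
    rw [Finset.sum_congr rfl this, Finset.sum_const, Finset.card_powersetCard,
      Finset.card_univ, Fintype.card_fin, smul_eq_mul]
  -- injectivity of the support map
  have hinj : Set.InjOn (fun x => rowsOf A x.1 (ext x)) ↑𝓘 := by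
    intro x hx y hy hxy
    obtain ⟨hI1, hσ⟩ := hLoc x.1 (ext x) y.1 (ext y) (hinter x hx) (hinter y hy) hxy
    obtain ⟨I, f⟩ := x
    obtain ⟨J, g⟩ := y
    dsimp only at hI1
    subst hI1
    congr 1
    funext i
    have := hσ i i.2
    simp only [ext, dif_pos i.2] at this
    exact Fin.ext this
  -- each row contains exactly n interactions
  have hrow : ∀ r : Fin N, (𝓘.filter fun x => r ∈ rowsOf A x.1 (ext x)).card = n := by
    intro r
    have := Finset.card_bij (s := 𝓘.filter fun x => r ∈ rowsOf A x.1 (ext x))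
      (t := Finset.univ.powersetCard t) (fun x _ => x.1)
      (fun x hx => Finset.mem_powersetCard_univ.mpr ((hmem x).1 (Finset.mem_filter.mp hx).1))
      (fun x hx y hy hxy => by
        have hx' := (Finset.mem_filter.mp hx).2
        have hy' := (Finset.mem_filter.mp hy).2
        simp only [rowsOf, Finset.mem_filter, Finset.mem_univ, true_and] at hx' hy'
        obtain ⟨I, f⟩ := x
        obtain ⟨J, g⟩ := y
        dsimp only at hxy
        subst hxy
        congr 1
        funext i
        have h1 := hx' i i.2
        have h2 := hy' i i.2
        simp only [ext, dif_pos i.2] at h1 h2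
        exact Fin.ext (h1.symm.trans h2))
      (fun I hI => by
        refine ⟨⟨I, fun i => ⟨A r i, hA r i⟩⟩, Finset.mem_filter.mpr ⟨(hmem _).2
          (Finset.mem_powersetCard_univ.mp hI), ?_⟩, rfl⟩
        simp only [rowsOf, Finset.mem_filter, Finset.mem_univ, true_and]
        intro i hi
        simp [ext, dif_pos hi])
    rw [this, Finset.card_powersetCard, Finset.card_univ, Fintype.card_fin, hn]
  -- double counting : total incidence count
  have hsum : ∑ x ∈ 𝓘, (rowsOf A x.1 (ext x)).card = N * n := by
    have h1 : ∀ x : (Σ I : Finset (Fin k), (I → Fin v)),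
        (rowsOf A x.1 (ext x)).card
          = ∑ r : Fin N, if r ∈ rowsOf A x.1 (ext x) then 1 else 0 := by
      intro x
      rw [← Finset.card_filter, Finset.filter_univ_mem]
    rw [Finset.sum_congr rfl (fun x _ => h1 x), Finset.sum_comm]
    rw [Finset.sum_congr rfl (fun r _ => by rw [← Finset.card_filter, hrow r]),
      Finset.sum_const, Finset.card_univ, Fintype.card_fin, smul_eq_mul]
  -- interactions with singleton support
  set S₁ := 𝓘.filter (fun x => (rowsOf A x.1 (ext x)).card = 1) with hS₁def
  have hS₁ : S₁.card ≤ N := by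
    have h1 : S₁.card ≤ (Finset.univ.image fun r : Fin N => ({r} : Finset (Fin N))).card := by
      refine Finset.card_le_card_of_injOn (fun x => rowsOf A x.1 (ext x)) (fun x hx => ?_)
        (hinj.mono (by exact_mod_cast Finset.filter_subset _ _))
      obtain ⟨a, ha⟩ := Finset.card_eq_one.mp (Finset.mem_filter.mp hx).2
      exact Finset.mem_image.mpr ⟨a, Finset.mem_univ a, ha.symm⟩
    calc S₁.card ≤ _ := h1
      _ ≤ (Finset.univ : Finset (Fin N)).card := Finset.card_image_le
      _ = N := by rw [Finset.card_univ, Fintype.card_fin]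
  -- lower bound on total incidence count
  have hlow : 2 * 𝓘.card ≤ (∑ x ∈ 𝓘, (rowsOf A x.1 (ext x)).card) + S₁.card := by
    have hpt : ∀ x ∈ 𝓘, 2 ≤ (rowsOf A x.1 (ext x)).card + (if x ∈ S₁ then 1 else 0) := by
      intro x hx
      by_cases h : x ∈ S₁
      · rw [if_pos h, (Finset.mem_filter.mp h).2]
      · rw [if_neg h]
        have hne : (rowsOf A x.1 (ext x)).Nonempty := hMCA x.1 (ext x) (hinter x hx)
        have h1 : 1 ≤ (rowsOf A x.1 (ext x)).card := Finset.card_pos.mpr hne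
        have h2 : (rowsOf A x.1 (ext x)).card ≠ 1 := fun hc =>
          h (Finset.mem_filter.mpr ⟨hx, hc⟩)
        omega
    calc 2 * 𝓘.card = ∑ _x ∈ 𝓘, 2 := by rw [Finset.sum_const, smul_eq_mul, mul_comm]
      _ ≤ ∑ x ∈ 𝓘, ((rowsOf A x.1 (ext x)).card + (if x ∈ S₁ then 1 else 0)) :=
          Finset.sum_le_sum hpt
      _ = (∑ x ∈ 𝓘, (rowsOf A x.1 (ext x)).card) + ∑ x ∈ 𝓘, (if x ∈ S₁ then 1 else 0) :=
          Finset.sum_add_distrib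
      _ = (∑ x ∈ 𝓘, (rowsOf A x.1 (ext x)).card) + S₁.card := by
          rw [← Finset.card_filter, Finset.filter_mem_eq_inter,
            Finset.inter_eq_right.mpr (Finset.filter_subset _ _)]
  -- conclude
  have key : 2 * (n * v ^ t) ≤ N * n + N := by
    calc 2 * (n * v ^ t) = 2 * 𝓘.card := by rw [hcard𝓘]
      _ ≤ (∑ x ∈ 𝓘, (rowsOf A x.1 (ext x)).card) + S₁.card := hlow
      _ ≤ N * n + N := add_le_add (le_of_eq hsum) hS₁
  rw [Nat.div_le_iff_le_mul_add_pred (by omega)]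
  have : (1 + n) * N + (1 + n - 1) = N * n + N + n := by ring_nf; omega
  rw [this, mul_assoc]
  omega
end

section
/- Let t≥2 and let A be a (1̄,t)-locating array with N rows, k columns, and alphabet sizes 2≤v₁≤⋯≤v_k satisfying v_{k−t} < v_{k−t+1} < 2v_{k−t}. Then N ≥ ∏_{i=k−t+1}^{k} v_i + ∏_{i=k−t+2}^{k} v_i. -/
open Finset

lemma mem_rowsOf {R ι : Type*} [Fintype R] [DecidableEq ι] (A : R → ι → ℕ)
    (I : Finset ι) (σ : ι → ℕ) (r : R) : r ∈ rowsOf A I σ ↔ ∀ i ∈ I, A r i = σ i := by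
  simp [rowsOf]

lemma all_one {α : Type*} [DecidableEq α] (s : Finset α) (f : α → ℕ)
    (h1 : ∀ x ∈ s, 1 ≤ f x) (h2 : ∑ x ∈ s, f x ≤ s.card) : ∀ x ∈ s, f x = 1 := by
  intro x hx
  have h3 := Finset.sum_erase_add s f hx
  have h4 : (s.erase x).card • 1 ≤ ∑ y ∈ s.erase x, f y :=
    Finset.card_nsmul_le_sum _ _ _ (fun y hy => h1 y (Finset.mem_of_mem_erase hy))
  have h5 : (s.erase x).card = s.card - 1 := Finset.card_erase_of_mem hx
  have h6 := h1 x hx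
  have hc : 1 ≤ s.card := Finset.card_pos.mpr ⟨x, hx⟩
  simp only [smul_eq_mul, mul_one] at h4
  omega

/-- Lower bound when `t ≥ 2` and `v_{k-t} < v_{k-t+1} < 2 v_{k-t}` (1-based):
`N ≥ ∏_{i=k-t+1}^k v_i + ∏_{i=k-t+2}^k v_i`. -/
theorem stmt_4 {N k t : ℕ} (ht2 : 2 ≤ t) (htk : t < k) (v : Fin k → ℕ)
    (h2 : ∀ i, 2 ≤ v i) (hmono : Monotone v)
    (hlt : v ⟨k - t - 1, by omega⟩ < v ⟨k - t, by omega⟩)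
    (hlt2 : v ⟨k - t, by omega⟩ < 2 * v ⟨k - t - 1, by omega⟩)
    (A : Fin N → Fin k → ℕ) (hA : ∀ r j, A r j < v j) (hLA : isLA A v t) :
    (∏ i ∈ lastCols k t, v i)
      + ∏ i ∈ Finset.univ.filter (fun i : Fin k => k - t + 1 ≤ (i : ℕ)), v i ≤ N := by
  classical
  obtain ⟨hcov, hloc⟩ := hLA
  have hck : k - t < k := by omega
  have hdk : k - t - 1 < k := by omega
  set c : Fin k := ⟨k - t, hck⟩ with hcdef
  set d : Fin k := ⟨k - t - 1, hdk⟩ with hddef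
  have hlt' : v d < v c := hlt
  have hlt2' : v c < 2 * v d := hlt2
  set S : Finset (Fin k) := Finset.univ.filter (fun i : Fin k => k - t + 1 ≤ (i : ℕ)) with hSdef
  have hcS : c ∉ S := by simp [hSdef, hcdef]
  have hdS : d ∉ S := by simp [hSdef, hddef]
  have hdc : d ≠ c := by
    intro h
    have : (d : ℕ) = (c : ℕ) := by rw [h]
    simp [hcdef, hddef] at this
    omega
  have hScard : S.card = t - 1 := by
    have hE : S = Finset.Ici (⟨k - t + 1, by omega⟩ : Fin k) := by
      ext i
      simp [hSdef, Fin.le_def]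
    rw [hE, Fin.card_Ici]
    simp
    omega
  have hlast : lastCols k t = insert c S := by
    ext i
    simp [lastCols, hSdef, hcdef, Fin.ext_iff]
    omega
  set P : Finset (Fin k → ℕ) :=
    Fintype.piFinset (fun i : Fin k => if i ∈ S then Finset.range (v i) else ({0} : Finset ℕ))
    with hPdef
  have hPmem : ∀ σ, σ ∈ P ↔ (∀ i ∈ S, σ i < v i) ∧ ∀ i ∉ S, σ i = 0 := by
    intro σ
    simp only [hPdef, Fintype.mem_piFinset]
    constructor
    · intro h
      refine ⟨fun i hi => ?_, fun i hi => ?_⟩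
      · have := h i; rw [if_pos hi] at this; simpa using this
      · have := h i; rw [if_neg hi] at this; simpa using this
    · rintro ⟨h1, h0⟩ i
      by_cases hi : i ∈ S
      · rw [if_pos hi]; simpa using h1 i hi
      · rw [if_neg hi]; simpa using h0 i hi
  have hPcard : P.card = ∏ i ∈ S, v i := by
    have hcc : ∀ i : Fin k,
        (if i ∈ S then Finset.range (v i) else ({0} : Finset ℕ)).card
          = if i ∈ S then v i else 1 := by
      intro i; split <;> simp
    rw [hPdef, Fintype.card_piFinset]
    simp_rw [hcc]
    rw [Finset.prod_ite_mem, Finset.univ_inter]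
  have key : ∀ σ ∈ P, v c + 1 ≤ (rowsOf A S σ).card := by
    intro σ hσ
    obtain ⟨hσ1, _⟩ := (hPmem σ).mp hσ
    have hint : ∀ (j : Fin k), j ∉ S → ∀ a < v j,
        isInter v t (insert j S) (Function.update σ j a) := by
      intro j hj a ha
      constructor
      · rw [Finset.card_insert_of_notMem hj, hScard]; omega
      · intro i hi
        rcases Finset.mem_insert.mp hi with h | h
        · subst h; rwa [Function.update_self]
        · rw [Function.update_of_ne (ne_of_mem_of_not_mem h hj)]
          exact hσ1 i h
    have hne : ∀ (j : Fin k), j ∉ S → ∀ a, a < v j →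
        (rowsOf A (insert j S) (Function.update σ j a)).Nonempty :=
      fun j hj a ha => hcov _ _ (hint j hj a ha)
    have hsub : ∀ (j : Fin k), j ∉ S → ∀ a : ℕ,
        rowsOf A (insert j S) (Function.update σ j a) ⊆ rowsOf A S σ := by
      intro j hj a r hr
      rw [mem_rowsOf] at hr ⊢
      intro i hi
      have := hr i (Finset.mem_insert_of_mem hi)
      rwa [Function.update_of_ne (ne_of_mem_of_not_mem hi hj)] at this
    have hsum : ∀ (j : Fin k), j ∉ S → ∀ m : ℕ,
        ∑ a ∈ Finset.range m, (rowsOf A (insert j S) (Function.update σ j a)).card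
          ≤ (rowsOf A S σ).card := by
      intro j hj m
      rw [← Finset.card_biUnion]
      · apply Finset.card_le_card
        intro r hr
        obtain ⟨a, _, hr⟩ := Finset.mem_biUnion.mp hr
        exact hsub j hj a hr
      · intro a _ b _ hab
        apply Finset.disjoint_left.mpr
        intro r hra hrb
        apply hab
        have h1 : A r j = a := by
          have := (mem_rowsOf A _ _ r).mp hra j (Finset.mem_insert_self j S)
          rwa [Function.update_self] at this
        have h2 : A r j = b := by
          have := (mem_rowsOf A _ _ r).mp hrb j (Finset.mem_insert_self j S)
          rwa [Function.update_self] at this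
        omega
    by_contra hcon
    push_neg at hcon
    have hcard : (rowsOf A S σ).card ≤ v c := by omega
    have h1le : ∀ a ∈ Finset.range (v c),
        1 ≤ (rowsOf A (insert c S) (Function.update σ c a)).card := by
      intro a ha
      exact Finset.card_pos.mpr (hne c hcS a (Finset.mem_range.mp ha))
    have honeA : ∀ a ∈ Finset.range (v c),
        (rowsOf A (insert c S) (Function.update σ c a)).card = 1 := by
      apply all_one _ _ h1le
      rw [Finset.card_range]
      exact le_trans (hsum c hcS (v c)) hcard
    have hexb : ∃ b, b < v d ∧ (rowsOf A (insert d S) (Function.update σ d b)).card = 1 := by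
      by_contra hb
      push_neg at hb
      have h2le : ∀ b ∈ Finset.range (v d),
          2 ≤ (rowsOf A (insert d S) (Function.update σ d b)).card := by
        intro b hb'
        have e1 := Finset.card_pos.mpr (hne d hdS b (Finset.mem_range.mp hb'))
        have e2 := hb b (Finset.mem_range.mp hb')
        omega
      have h3 := Finset.card_nsmul_le_sum (Finset.range (v d)) _ 2 h2le
      have hsd := hsum d hdS (v d)
      simp only [Finset.card_range, smul_eq_mul] at h3
      omega
    obtain ⟨b, hbv, hb1⟩ := hexb
    obtain ⟨r, hr⟩ := Finset.card_eq_one.mp hb1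
    have hrmem : r ∈ rowsOf A (insert d S) (Function.update σ d b) := by
      rw [hr]; exact Finset.mem_singleton_self r
    have hav : A r c < v c := hA r c
    have hrS : ∀ i ∈ S, A r i = σ i := by
      intro i hi
      have := (mem_rowsOf A _ _ r).mp hrmem i (Finset.mem_insert_of_mem hi)
      rwa [Function.update_of_ne (ne_of_mem_of_not_mem hi hdS)] at this
    have hrmemA : r ∈ rowsOf A (insert c S) (Function.update σ c (A r c)) := by
      rw [mem_rowsOf]
      intro i hi
      rcases Finset.mem_insert.mp hi with h | h
      · subst h; rw [Function.update_self]
      · rw [Function.update_of_ne (ne_of_mem_of_not_mem h hcS)]; exact hrS i h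
    obtain ⟨r', hr'⟩ := Finset.card_eq_one.mp (honeA (A r c) (Finset.mem_range.mpr hav))
    have hrr : r = r' := by
      rw [hr'] at hrmemA
      exact Finset.mem_singleton.mp hrmemA
    have heq : rowsOf A (insert c S) (Function.update σ c (A r c))
        = rowsOf A (insert d S) (Function.update σ d b) := by
      rw [hr', hr, ← hrr]
    have hres := hloc _ _ _ _ (hint c hcS (A r c) hav) (hint d hdS b hbv) heq
    have hmem : d ∈ insert c S := by rw [hres.1]; exact Finset.mem_insert_self d S
    rcases Finset.mem_insert.mp hmem with h | h
    · exact hdc h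
    · exact hdS h
  have hdisjP : ∀ σ₁ ∈ P, ∀ σ₂ ∈ P, σ₁ ≠ σ₂ → Disjoint (rowsOf A S σ₁) (rowsOf A S σ₂) := by
    intro σ₁ h₁ σ₂ h₂ hne
    obtain ⟨hm1, hz1⟩ := (hPmem σ₁).mp h₁
    obtain ⟨hm2, hz2⟩ := (hPmem σ₂).mp h₂
    apply Finset.disjoint_left.mpr
    intro r hr1 hr2
    apply hne
    funext i
    by_cases hi : i ∈ S
    · have e1 := (mem_rowsOf A _ _ r).mp hr1 i hi
      have e2 := (mem_rowsOf A _ _ r).mp hr2 i hi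
      omega
    · rw [hz1 i hi, hz2 i hi]
  have hsumN : ∑ σ ∈ P, (rowsOf A S σ).card ≤ N := by
    rw [← Finset.card_biUnion hdisjP]
    have := Finset.card_le_univ (P.biUnion (rowsOf A S))
    simpa using this
  have hfinal : (v c + 1) * P.card ≤ N := by
    calc (v c + 1) * P.card = ∑ _σ ∈ P, (v c + 1) := by
          rw [Finset.sum_const, smul_eq_mul, mul_comm]
      _ ≤ ∑ σ ∈ P, (rowsOf A S σ).card := Finset.sum_le_sum key
      _ ≤ N := hsumN
  rw [hlast, Finset.prod_insert hcS]
  calc v c * ∏ i ∈ S, v i + ∏ i ∈ S, v i = (v c + 1) * P.card := by rw [hPcard]; ring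
    _ ≤ N := hfinal
end

section
/- Let t=1 and let A be a (1̄,1)-locating array with N rows, k≥2 columns, and alphabet sizes 2≤v₁≤⋯≤v_k satisfying v_{k−1} < v_k < 2v_{k−1}. Then N ≥ ⌈(2v_{k−1} + 2v_k)/3⌉. -/
open Finset

set_option maxHeartbeats 1600000 in
/-- Lower bound for `t = 1`, `k ≥ 2`, `v_{k-1} < v_k < 2 v_{k-1}` (1-based):
`N` is at least the ceiling of `(2 v_{k-1} + 2 v_k) / 3`. -/
theorem stmt_5 {N k : ℕ} (hk : 2 ≤ k) (v : Fin k → ℕ)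
    (h2 : ∀ i, 2 ≤ v i) (hmono : Monotone v)
    (hlt : v ⟨k - 2, by omega⟩ < v ⟨k - 1, by omega⟩)
    (hlt2 : v ⟨k - 1, by omega⟩ < 2 * v ⟨k - 2, by omega⟩)
    (A : Fin N → Fin k → ℕ) (hA : ∀ r j, A r j < v j) (hLA : isLA A v 1) :
    (2 * v ⟨k - 2, by omega⟩ + 2 * v ⟨k - 1, by omega⟩ + 2) / 3 ≤ N := by
  classical
  obtain ⟨hMCA, hLoc⟩ := hLA
  set a : Fin k := ⟨k - 2, by omega⟩ with ha
  set b : Fin k := ⟨k - 1, by omega⟩ with hb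
  have hab : a ≠ b := by
    intro h
    have := congrArg Fin.val h
    simp only [ha, hb] at this
    omega
  have hInter : ∀ (c : Fin k) (s : ℕ), s < v c → isInter v 1 {c} (fun _ => s) := by
    intro c s hs
    refine ⟨Finset.card_singleton c, ?_⟩
    intro i hi
    simp only [Finset.mem_singleton] at hi
    subst hi
    exact hs
  set F : Fin k → ℕ → Finset (Fin N) := fun c s => univ.filter (fun r => A r c = s) with hF
  have hrows : ∀ c s, rowsOf A {c} (fun _ => s) = F c s := by
    intro c s
    ext r
    simp [rowsOf, hF]
  have hne : ∀ c s, s < v c → (F c s).Nonempty := by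
    intro c s hs
    rw [← hrows]
    exact hMCA _ _ (hInter c s hs)
  have hdist : ∀ s₁ s₂, s₁ < v a → s₂ < v b → F a s₁ ≠ F b s₂ := by
    intro s₁ s₂ h1 h2 heq
    rw [← hrows, ← hrows] at heq
    have := (hLoc _ _ _ _ (hInter a s₁ h1) (hInter b s₂ h2) heq).1
    exact hab (Finset.singleton_injective this)
  have hinj : ∀ c s₁ s₂, s₁ < v c → s₂ < v c → F c s₁ = F c s₂ → s₁ = s₂ := by
    intro c s₁ s₂ h1 h2 heq
    rw [← hrows, ← hrows] at heq
    exact (hLoc _ _ _ _ (hInter c s₁ h1) (hInter c s₂ h2) heq).2 c (Finset.mem_singleton_self c)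
  have hsum : ∀ c, ∑ s ∈ range (v c), (F c s).card = N := by
    intro c
    have := Finset.card_eq_sum_card_fiberwise
      (s := (univ : Finset (Fin N))) (t := range (v c)) (f := fun r => A r c)
      (fun r _ => mem_range.mpr (hA r c))
    simpa [hF] using this.symm
  set Sg : Fin k → Finset ℕ := fun c => (range (v c)).filter (fun s => (F c s).card = 1) with hSg
  have hSgcard : ∀ c, (Sg c).card ≤ v c := by
    intro c
    simpa using Finset.card_le_card (Finset.filter_subset _ (range (v c)))
  have hlow : ∀ c, 2 * v c ≤ N + (Sg c).card := by
    intro c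
    have hsplit := Finset.sum_filter_add_sum_filter_not (range (v c))
      (fun s => (F c s).card = 1) (fun s => (F c s).card)
    have h1 : ∑ s ∈ (range (v c)).filter (fun s => (F c s).card = 1), (F c s).card
        = (Sg c).card := by
      rw [Finset.sum_congr rfl (fun s hs => (Finset.mem_filter.mp hs).2)]
      simp [hSg]
    have h2 : ((range (v c)).filter (fun s => ¬ (F c s).card = 1)).card * 2
        ≤ ∑ s ∈ (range (v c)).filter (fun s => ¬ (F c s).card = 1), (F c s).card := by
      have := Finset.card_nsmul_le_sum
        ((range (v c)).filter (fun s => ¬ (F c s).card = 1))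
        (fun s => (F c s).card) 2 ?_
      · simpa [smul_eq_mul] using this
      · intro s hs
        obtain ⟨hsr, hs1⟩ := Finset.mem_filter.mp hs
        have hnonempty := hne c s (mem_range.mp hsr)
        have := Finset.card_pos.mpr hnonempty
        show 2 ≤ (F c s).card
        omega
    have hcards : (Sg c).card + ((range (v c)).filter (fun s => ¬ (F c s).card = 1)).card
        = v c := by
      have := Finset.card_filter_add_card_filter_not
        (s := range (v c)) (p := fun s => (F c s).card = 1)
      simpa [hSg] using this
    have hN := hsum c
    omega
  -- singleton supports are pairwise distinct
  have hST : (Sg a).card + (Sg b).card ≤ N := by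
    have hcardTa : ((Sg a).image (F a)).card = (Sg a).card := by
      apply Finset.card_image_of_injOn
      intro s₁ hs₁ s₂ hs₂ heq
      exact hinj a s₁ s₂ (mem_range.mp (Finset.mem_filter.mp hs₁).1)
        (mem_range.mp (Finset.mem_filter.mp hs₂).1) heq
    have hcardTb : ((Sg b).image (F b)).card = (Sg b).card := by
      apply Finset.card_image_of_injOn
      intro s₁ hs₁ s₂ hs₂ heq
      exact hinj b s₁ s₂ (mem_range.mp (Finset.mem_filter.mp hs₁).1)
        (mem_range.mp (Finset.mem_filter.mp hs₂).1) heq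
    have hdisj : Disjoint ((Sg a).image (F a)) ((Sg b).image (F b)) := by
      rw [Finset.disjoint_left]
      intro S hSa hSb
      obtain ⟨s₁, hs₁, rfl⟩ := Finset.mem_image.mp hSa
      obtain ⟨s₂, hs₂, heq⟩ := Finset.mem_image.mp hSb
      exact hdist s₁ s₂ (mem_range.mp (Finset.mem_filter.mp hs₁).1)
        (mem_range.mp (Finset.mem_filter.mp hs₂).1) heq.symm
    have hsub : ((Sg a).image (F a)) ∪ ((Sg b).image (F b)) ⊆
        (univ : Finset (Fin N)).image (fun r => ({r} : Finset (Fin N))) := by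
      intro S hS
      have hcard1 : S.card = 1 := by
        rcases Finset.mem_union.mp hS with h | h
        · obtain ⟨s, hs, rfl⟩ := Finset.mem_image.mp h
          exact (Finset.mem_filter.mp hs).2
        · obtain ⟨s, hs, rfl⟩ := Finset.mem_image.mp h
          exact (Finset.mem_filter.mp hs).2
      obtain ⟨x, rfl⟩ := Finset.card_eq_one.mp hcard1
      exact Finset.mem_image.mpr ⟨x, Finset.mem_univ x, rfl⟩
    have h1 : (((Sg a).image (F a)) ∪ ((Sg b).image (F b))).card ≤ N := by
      calc (((Sg a).image (F a)) ∪ ((Sg b).image (F b))).card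
          ≤ ((univ : Finset (Fin N)).image (fun r => ({r} : Finset (Fin N)))).card :=
            Finset.card_le_card hsub
        _ ≤ (univ : Finset (Fin N)).card := Finset.card_image_le
        _ = N := by simp
    rw [Finset.card_union_of_disjoint hdisj, hcardTa, hcardTb] at h1
    exact h1
  have hla := hlow a
  have hlb := hlow b
  omega
end

section
/- If A is a (1̄,t)-locating array with N = ∏_{i=k−t+1}^{k} v_i rows and alphabet sizes 2≤v₁≤⋯≤v_{k−t}, 2v_{k−t}≤v_{k−t+1}≤⋯≤v_k, then every t-way interaction on the last t columns appears in exactly one row of A, and every other t-way interaction appears in at least two rows of A. -/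
open Finset

/-- A `(1-bar,t)`-locating array meeting the bound `N = ∏_{i=k-t+1}^k v_i` is an `MCA₂*`:
interactions on the last `t` columns appear exactly once, all others at least twice. -/
theorem stmt_6 {N k t : ℕ} (ht : t < k) (v : Fin k → ℕ) (h2 : ∀ i, 2 ≤ v i)
    (hmono : Monotone v)
    (hjump : ∀ i j : Fin k, (i : ℕ) < k - t → k - t ≤ (j : ℕ) → 2 * v i ≤ v j)
    (A : Fin N → Fin k → ℕ) (hA : ∀ r j, A r j < v j) (hLA : isLA A v t)
    (hN : N = ∏ i ∈ lastCols k t, v i) :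
    (∀ σ : Fin k → ℕ, (∀ i ∈ lastCols k t, σ i < v i) →
        (rowsOf A (lastCols k t) σ).card = 1) ∧
    (∀ I σ, isInter v t I σ → I ≠ lastCols k t → 2 ≤ (rowsOf A I σ).card) := by
  classical
  obtain ⟨hMCA, hLoc⟩ := hLA
  set L := lastCols k t with hLdef
  have hLcard : L.card = t := by
    rw [hLdef]
    unfold lastCols
    rw [Finset.card_filter, Fin.sum_univ_eq_sum_range (fun i => if k - t ≤ i then 1 else 0),
      ← Finset.card_filter, Finset.range_eq_Ico, Finset.Ico_filter_le, Nat.card_Ico]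
    omega
  -- truncation
  set tr : (Fin k → ℕ) → (Fin k → ℕ) := fun σ i => if i ∈ L then σ i else 0 with htr
  have hrows_tr : ∀ σ, rowsOf A L σ = rowsOf A L (tr σ) := by
    intro σ
    ext r
    rw [mem_rowsOf, mem_rowsOf]
    refine forall₂_congr fun i hi => ?_
    rw [htr]
    simp [hi]
  -- the set of truncated assignments
  set S : Finset (Fin k → ℕ) :=
    (L.pi fun i => Finset.range (v i)).image (fun f i => if h : i ∈ L then f i h else 0) with hS
  have hmemS : ∀ r : Fin N, tr (A r) ∈ S := by
    intro r
    rw [hS]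
    apply Finset.mem_image.mpr
    refine ⟨fun i _ => A r i, ?_, ?_⟩
    · rw [Finset.mem_pi]; intro i _; exact Finset.mem_range.mpr (hA r i)
    · funext i; rw [htr]; by_cases hi : i ∈ L <;> simp [hi]
  have hSprop : ∀ σ ∈ S, (∀ i ∈ L, σ i < v i) ∧ ∀ i, i ∉ L → σ i = 0 := by
    intro σ hσ
    rw [hS, Finset.mem_image] at hσ
    obtain ⟨f, hf, rfl⟩ := hσ
    rw [Finset.mem_pi] at hf
    constructor
    · intro i hi; simpa [hi] using Finset.mem_range.mp (hf i hi)
    · intro i hi; simp [hi]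
  have hSinter : ∀ σ ∈ S, isInter v t L σ := fun σ hσ => ⟨hLcard, (hSprop σ hσ).1⟩
  have hScard : S.card = N := by
    rw [hS, Finset.card_image_of_injOn, Finset.card_pi]
    · simp only [Finset.card_range]
      exact hN.symm
    · intro f hf g hg hfg
      funext i hi
      have := congrFun hfg i
      simpa [dif_pos hi] using this
  -- disjoint union
  have hdisj : ∀ σ₁ ∈ S, ∀ σ₂ ∈ S, σ₁ ≠ σ₂ → Disjoint (rowsOf A L σ₁) (rowsOf A L σ₂) := by
    intro σ₁ h₁ σ₂ h₂ hne
    rw [Finset.disjoint_left]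
    intro r hr₁ hr₂
    apply hne
    funext i
    by_cases hi : i ∈ L
    · rw [← (mem_rowsOf A L σ₁ r).mp hr₁ i hi, (mem_rowsOf A L σ₂ r).mp hr₂ i hi]
    · rw [(hSprop σ₁ h₁).2 i hi, (hSprop σ₂ h₂).2 i hi]
  have hcover : S.biUnion (fun σ => rowsOf A L σ) = Finset.univ := by
    apply Finset.eq_univ_of_forall
    intro r
    apply Finset.mem_biUnion.mpr
    refine ⟨tr (A r), hmemS r, (mem_rowsOf A L _ r).mpr fun i hi => ?_⟩
    rw [htr]; simp [hi]
  have hsum : ∑ σ ∈ S, (rowsOf A L σ).card = N := by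
    rw [← Finset.card_biUnion hdisj, hcover, Finset.card_univ, Fintype.card_fin]
  -- each class has exactly one row
  have hone : ∀ σ ∈ S, (rowsOf A L σ).card = 1 := by
    by_contra hcon
    push_neg at hcon
    obtain ⟨σ₀, hσ₀S, hσ₀⟩ := hcon
    have hge : ∀ σ ∈ S, 1 ≤ (rowsOf A L σ).card :=
      fun σ hσ => Finset.card_pos.mpr (hMCA L σ (hSinter σ hσ))
    have hlt : (1 : ℕ) < (rowsOf A L σ₀).card :=
      lt_of_le_of_ne (hge σ₀ hσ₀S) (Ne.symm hσ₀)
    have : ∑ σ ∈ S, 1 < ∑ σ ∈ S, (rowsOf A L σ).card :=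
      Finset.sum_lt_sum hge ⟨σ₀, hσ₀S, hlt⟩
    rw [Finset.sum_const, smul_eq_mul, mul_one, hScard, hsum] at this
    exact lt_irrefl N this
  have part1 : ∀ σ : Fin k → ℕ, (∀ i ∈ L, σ i < v i) → (rowsOf A L σ).card = 1 := by
    intro σ hσ
    rw [hrows_tr σ]
    apply hone
    rw [hS]
    apply Finset.mem_image.mpr
    refine ⟨fun i hi => σ i, ?_, rfl⟩
    rw [Finset.mem_pi]
    intro i hi
    exact Finset.mem_range.mpr (hσ i hi)
  refine ⟨part1, ?_⟩
  intro I σ hI hne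
  by_contra hcard
  push_neg at hcard
  have hpos : 1 ≤ (rowsOf A I σ).card := Finset.card_pos.mpr (hMCA I σ hI)
  have h1 : (rowsOf A I σ).card = 1 := by omega
  obtain ⟨r, hr⟩ := Finset.card_eq_one.mp h1
  set σ' : Fin k → ℕ := fun i => if i ∈ L then A r i else 0 with hσ'
  have hσ'lt : ∀ i ∈ L, σ' i < v i := by
    intro i hi; rw [hσ']; simp only [if_pos hi]; exact hA r i
  have hrmem : r ∈ rowsOf A L σ' := by
    refine (mem_rowsOf A L σ' r).mpr fun i hi => ?_
    rw [hσ']; simp [hi]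
  have hc1 : (rowsOf A L σ').card = 1 := part1 σ' hσ'lt
  have heq : rowsOf A L σ' = {r} := by
    obtain ⟨r', hr'⟩ := Finset.card_eq_one.mp hc1
    rw [hr'] at hrmem ⊢
    rw [Finset.mem_singleton.mp hrmem]
  have := hLoc I σ L σ' hI ⟨hLcard, hσ'lt⟩ (by rw [hr, heq])
  exact hne this.1
end

section
/- If A is a mixed orthogonal array of strength t with N rows and k columns whose C(k,t) indices (one for each t-set of columns) are pairwise distinct, then A is a (1̄,t)-locating array: every t-way interaction appears in at least one row, and distinct t-way interactions have distinct row-support sets. -/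
open Finset

/-- A mixed orthogonal array of strength `t` with pairwise distinct indices is a
`(1-bar,t)`-locating array. -/
theorem stmt_7 {N k t : ℕ} (ht : t ≤ k) (hN : 0 < N) (v : Fin k → ℕ)
    (A : Fin N → Fin k → ℕ) (hA : ∀ r j, A r j < v j)
    (lam : Finset (Fin k) → ℕ)
    (hMOA : ∀ I σ, isInter v t I σ → (rowsOf A I σ).card = lam I)
    (hdist : ∀ I J : Finset (Fin k), I.card = t → J.card = t → I ≠ J → lam I ≠ lam J) :
    isLA A v t := by
  obtain ⟨r₀⟩ : Nonempty (Fin N) := ⟨⟨0, hN⟩⟩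
  have hpos : ∀ I : Finset (Fin k), I.card = t → 0 < lam I := by
    intro I hI
    have hint : isInter v t I (A r₀) := ⟨hI, fun i _ => hA r₀ i⟩
    rw [← hMOA I (A r₀) hint]
    exact Finset.card_pos.mpr ⟨r₀, by simp [rowsOf]⟩
  have hMCA : isMCA A v t := by
    intro I σ h
    have := hMOA I σ h
    exact Finset.card_pos.mp (by rw [this]; exact hpos I h.1)
  refine ⟨hMCA, ?_⟩
  intro I₁ σ₁ I₂ σ₂ h₁ h₂ heq
  have hlam : lam I₁ = lam I₂ := by
    rw [← hMOA I₁ σ₁ h₁, ← hMOA I₂ σ₂ h₂, heq]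
  have hI : I₁ = I₂ := by
    by_contra hne
    exact hdist I₁ I₂ h₁.1 h₂.1 hne hlam
  refine ⟨hI, fun i hi => ?_⟩
  obtain ⟨r, hr⟩ := hMCA I₁ σ₁ h₁
  simp only [rowsOf, Finset.mem_filter] at hr
  have hr2 : r ∈ rowsOf A I₂ σ₂ := by
    rw [← heq]; simp only [rowsOf, Finset.mem_filter]; exact ⟨Finset.mem_univ r, hr.2⟩
  simp only [rowsOf, Finset.mem_filter] at hr2
  rw [← hr.2 i hi, hr2.2 i (hI ▸ hi)]
end

section
/- Suppose v₁≤v₂≤⋯≤v_k and A is a pairwise-distinct-index mixed orthogonal array of strength t in which at least one of the indices equals 1. Then v₁<v₂<⋯<v_k, and for all 1≤i≤k−t and k−t+1≤j≤k, v_i divides v_j. -/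
open Finset

/-- If `v₁ ≤ ⋯ ≤ v_k` and `A` is a PDIMOA* of strength `t` (pairwise distinct indices, one
index equal to 1), then the sizes are strictly increasing and `v_i` divides `v_j` whenever
`i ≤ k - t < j` (1-based). -/
theorem stmt_8 {N k t : ℕ} (ht1 : 1 ≤ t) (htk : t < k) (hN : 0 < N)
    (v : Fin k → ℕ) (hmono : Monotone v)
    (A : Fin N → Fin k → ℕ) (hA : ∀ r j, A r j < v j)
    (lam : Finset (Fin k) → ℕ)
    (hMOA : ∀ I σ, isInter v t I σ → (rowsOf A I σ).card = lam I)
    (hdist : ∀ I J : Finset (Fin k), I.card = t → J.card = t → I ≠ J → lam I ≠ lam J)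
    (hstar : ∃ S : Finset (Fin k), S.card = t ∧ lam S = 1) :
    StrictMono v ∧
      ∀ i j : Fin k, (i : ℕ) < k - t → k - t ≤ (j : ℕ) → v i ∣ v j := by
    classical
  have vpos : ∀ i, 0 < v i := fun i => (Nat.zero_le _).trans_lt (hA ⟨0, hN⟩ i)
  have ppos : ∀ I : Finset (Fin k), 0 < ∏ i ∈ I, v i :=
    fun I => Finset.prod_pos fun i _ => vpos i
  -- Key counting: lam I * ∏ v = N for every t-set I
  have key : ∀ I : Finset (Fin k), I.card = t → lam I * ∏ i ∈ I, v i = N := by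
    intro I hI
    set B : Finset (Fin k → ℕ) :=
      Fintype.piFinset (fun i => if i ∈ I then Finset.range (v i) else {0}) with hB
    have hmap : ∀ r : Fin N, (fun i => if i ∈ I then A r i else 0) ∈ B := by
      intro r
      rw [hB, Fintype.mem_piFinset]
      intro i
      by_cases h : i ∈ I <;> simp [h, hA r i]
    have hNsum : (Finset.univ : Finset (Fin N)).card =
        ∑ σ ∈ B, (Finset.univ.filter
          (fun r => (fun i => if i ∈ I then A r i else 0) = σ)).card :=
      Finset.card_eq_sum_card_fiberwise (fun r _ => hmap r)
    have hfib : ∀ σ ∈ B, (Finset.univ.filter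
        (fun r : Fin N => (fun i => if i ∈ I then A r i else 0) = σ)).card = lam I := by
      intro σ hσ
      rw [hB, Fintype.mem_piFinset] at hσ
      have hrw : (Finset.univ.filter
          (fun r : Fin N => (fun i => if i ∈ I then A r i else 0) = σ)) = rowsOf A I σ := by
        ext r
        simp only [rowsOf, Finset.mem_filter, Finset.mem_univ, true_and]
        constructor
        · intro h i hi
          have := congrFun h i
          simpa [hi] using this
        · intro h
          funext i
          by_cases hi : i ∈ I
          · simpa [hi] using h i hi
          · have := hσ i
            simp only [hi, if_false, Finset.mem_singleton] at this
            simp [hi, this]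
      rw [hrw]
      apply hMOA
      refine ⟨hI, fun i hi => ?_⟩
      have := hσ i
      simpa [hi, Finset.mem_range] using this
    rw [Finset.sum_congr rfl hfib, Finset.sum_const, smul_eq_mul] at hNsum
    have hBcard : B.card = ∏ i ∈ I, v i := by
      rw [hB, Fintype.card_piFinset]
      have hc : ∀ i : Fin k, (if i ∈ I then Finset.range (v i) else ({0} : Finset ℕ)).card
          = if i ∈ I then v i else 1 := by
        intro i; by_cases h : i ∈ I <;> simp [h]
      rw [Finset.prod_congr rfl (fun i _ => hc i), Finset.prod_ite_mem, Finset.univ_inter]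
    rw [hBcard] at hNsum
    rw [mul_comm]
    simpa using hNsum.symm
  -- distinct products
  have prodinj : ∀ I J : Finset (Fin k), I.card = t → J.card = t →
      (∏ i ∈ I, v i) = ∏ i ∈ J, v i → I = J := by
    intro I J hI hJ h
    by_contra hne
    have h1 := key I hI
    have h2 := key J hJ
    rw [h] at h1
    exact hdist I J hI hJ hne (Nat.eq_of_mul_eq_mul_right (ppos J) (h1.trans h2.symm))
  -- injectivity of v
  have hinj : Function.Injective v := by
    intro a b hab
    by_contra hne
    obtain ⟨T, haT, hTsub, hTcard⟩ :=
      Finset.exists_subsuperset_card_eq (s := {a}) (t := Finset.univ.erase b)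
        (by simp [Finset.singleton_subset_iff, hne]) (by simpa using ht1)
        (by simp [Finset.card_erase_of_mem]; omega)
    have haT' : a ∈ T := haT (Finset.mem_singleton_self a)
    have hbT : b ∉ T := fun h => (Finset.mem_erase.mp (hTsub h)).1 rfl
    have hbT' : b ∉ T.erase a := fun h => hbT (Finset.mem_of_mem_erase h)
    set J := insert b (T.erase a) with hJ
    have hJcard : J.card = t := by
      rw [hJ, Finset.card_insert_of_notMem hbT', Finset.card_erase_of_mem haT', hTcard]
      omega
    have hprods : (∏ i ∈ T, v i) = ∏ i ∈ J, v i := by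
      rw [hJ, Finset.prod_insert hbT', ← hab, Finset.mul_prod_erase T v haT']
    have : T = J := prodinj T J hTcard hJcard hprods
    exact hbT (this ▸ Finset.mem_insert_self b (T.erase a))
  have hsm : StrictMono v := hmono.strictMono_of_injective hinj
  -- last columns
  set L := lastCols k t with hLdef
  have hL : L.card = t := by
    rw [show t = (Finset.Ico (k - t) k).card from by rw [Nat.card_Ico]; omega]
    apply Finset.card_bij (fun (i : Fin k) _ => (i : ℕ))
    · intro a ha
      rw [hLdef, lastCols, Finset.mem_filter] at ha
      simp [Finset.mem_Ico, ha.2, a.isLt]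
    · intro a _ b _ h
      exact Fin.val_injective h
    · intro m hm
      rw [Finset.mem_Ico] at hm
      exact ⟨⟨m, hm.2⟩, by rw [hLdef, lastCols]; simp only [Finset.mem_filter, Finset.mem_univ, true_and]; omega, rfl⟩
  have hmemL : ∀ i : Fin k, i ∈ L ↔ k - t ≤ (i : ℕ) := by
    intro i; rw [hLdef, lastCols]; simp
  -- maximality of the product over L
  have hmax : ∀ m (T : Finset (Fin k)), T.card = t → (T \ L).card ≤ m →
      (∏ i ∈ T, v i) ≤ ∏ i ∈ L, v i := by
    intro m
    induction m with
    | zero =>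
      intro T hT h0
      have hempty : T \ L = ∅ := Finset.card_eq_zero.mp (Nat.le_zero.mp h0)
      have hsub : T ⊆ L := Finset.sdiff_eq_empty_iff_subset.mp hempty
      rw [Finset.eq_of_subset_of_card_le hsub (by rw [hT, hL])]
    | succ m ih =>
      intro T hT hcard
      by_cases h0 : (T \ L).card = 0
      · exact ih T hT (by omega)
      obtain ⟨i, hi⟩ := Finset.card_pos.mp (Nat.pos_of_ne_zero h0)
      obtain ⟨j, hj⟩ := Finset.card_pos.mp
        (by rw [Finset.card_sdiff_comm (by rw [hT, hL])]; exact Nat.pos_of_ne_zero h0 :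
          0 < (L \ T).card)
      rw [Finset.mem_sdiff] at hi hj
      have hij : v i ≤ v j := by
        apply hmono
        rw [Fin.le_def]
        have h1 : ¬ (k - t ≤ (i : ℕ)) := fun h => hi.2 ((hmemL i).mpr h)
        have h2 : k - t ≤ (j : ℕ) := (hmemL j).mp hj.1
        omega
      have hjT : j ∉ T.erase i := fun h => hj.2 (Finset.mem_of_mem_erase h)
      set T' := insert j (T.erase i) with hT'
      have hT'card : T'.card = t := by
        rw [hT', Finset.card_insert_of_notMem hjT, Finset.card_erase_of_mem hi.1, hT]
        omega
      have hsd : (T' \ L).card ≤ m := by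
        have : T' \ L = (T \ L).erase i := by
          rw [hT', Finset.insert_sdiff_of_mem _ hj.1]
          ext x
          simp only [Finset.mem_sdiff, Finset.mem_erase]
          tauto
        rw [this, Finset.card_erase_of_mem (Finset.mem_sdiff.mpr hi)]
        omega
      calc (∏ x ∈ T, v x) = v i * ∏ x ∈ T.erase i, v x :=
            (Finset.mul_prod_erase T v hi.1).symm
        _ ≤ v j * ∏ x ∈ T.erase i, v x := Nat.mul_le_mul_right _ hij
        _ = ∏ x ∈ T', v x := (Finset.prod_insert hjT).symm
        _ ≤ ∏ x ∈ L, v x := ih T' hT'card hsd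
  -- N = product over L
  obtain ⟨S, hScard, hS1⟩ := hstar
  have hNS : N = ∏ i ∈ S, v i := by
    have := key S hScard; rw [hS1, one_mul] at this; exact this.symm
  have hkeyL := key L hL
  have hlamL : 0 < lam L := by
    rcases Nat.eq_zero_or_pos (lam L) with h | h
    · rw [h, zero_mul] at hkeyL; omega
    · exact h
  have hNL : N = ∏ i ∈ L, v i := by
    have h1 : N ≤ ∏ i ∈ L, v i := hNS.le.trans (hmax t S hScard (le_trans (Finset.card_le_card Finset.sdiff_subset) hScard.le))
    have h2 : (∏ i ∈ L, v i) ≤ N := by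
      calc (∏ i ∈ L, v i) ≤ lam L * ∏ i ∈ L, v i := Nat.le_mul_of_pos_left _ hlamL
        _ = N := hkeyL
    omega
  refine ⟨hsm, fun i j hij1 hij2 => ?_⟩
  have hjL : j ∈ L := (hmemL j).mpr hij2
  have hiL : i ∉ L := fun h => by have := (hmemL i).mp h; omega
  have hiL' : i ∉ L.erase j := fun h => hiL (Finset.mem_of_mem_erase h)
  set T := insert i (L.erase j) with hT
  have hTcard : T.card = t := by
    rw [hT, Finset.card_insert_of_notMem hiL', Finset.card_erase_of_mem hjL, hL]
    omega
  have hkeyT := key T hTcard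
  rw [hT, Finset.prod_insert hiL'] at hkeyT
  rw [hNL, ← Finset.mul_prod_erase L v hjL] at hkeyT
  have hQ : 0 < ∏ x ∈ L.erase j, v x := ppos _
  have : lam T * v i = v j := by
    apply Nat.eq_of_mul_eq_mul_right hQ
    rw [mul_assoc]
    exact hkeyT
  exact ⟨lam T, by rw [← this, mul_comm]⟩
end

section
/- Let t≥2 and let A be a (1̄,t)-locating array with N rows, k columns, and alphabet sizes (v₁,…,v_k). For each symbol x in the alphabet of column i, the subarray A(x) consisting of rows of A having x in column i, with column i deleted, is a (1̄,t−1)-locating array on k−1 columns. Consequently N ≥ v_i · LAN((1̄,t−1) type on the remaining k−1 alphabets). -/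
open Finset

/-- Minimum size of a `(1̄,t)`-locating array with column alphabet sizes `v`. -/
noncomputable def LAN (ι : Type*) [Fintype ι] [DecidableEq ι] (v : ι → ℕ) (t : ℕ) : ℕ :=
  sInf {n : ℕ | ∃ A : Fin n → ι → ℕ, (∀ r j, A r j < v j) ∧ isLA A v t}

lemma rowsOf_comp {R R' ι : Type*} [Fintype R] [Fintype R'] [DecidableEq ι]
    (B : R → ι → ℕ) (e : R' ≃ R) (I : Finset ι) (σ : ι → ℕ) :
    rowsOf (fun r => B (e r)) I σ = (rowsOf B I σ).map e.symm.toEmbedding := by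
  ext r
  simp only [mem_rowsOf, Finset.mem_map, Equiv.coe_toEmbedding]
  constructor
  · intro h; exact ⟨e r, h, by simp⟩
  · rintro ⟨s, hs, rfl⟩; simpa using hs

lemma isLA_comp {R R' ι : Type*} [Fintype R] [Fintype R'] [DecidableEq ι]
    (B : R → ι → ℕ) (e : R' ≃ R) (v : ι → ℕ) (t : ℕ) (h : isLA B v t) :
    isLA (fun r => B (e r)) v t := by
  obtain ⟨hm, hl⟩ := h
  constructor
  · intro I σ hI
    rw [rowsOf_comp B e]
    simpa [Finset.map_nonempty] using hm I σ hI
  · intro I₁ σ₁ I₂ σ₂ h₁ h₂ heq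
    rw [rowsOf_comp B e, rowsOf_comp B e] at heq
    exact hl I₁ σ₁ I₂ σ₂ h₁ h₂ (Finset.map_injective _ heq)

lemma LAN_le_card {R ι : Type*} [Fintype R] [Fintype ι] [DecidableEq ι]
    (B : R → ι → ℕ) (v : ι → ℕ) (t : ℕ)
    (hB : ∀ r j, B r j < v j) (h : isLA B v t) :
    LAN ι v t ≤ Fintype.card R :=
  Nat.sInf_le ⟨fun r => B ((Fintype.equivFin R).symm r), fun r j => hB _ _,
    isLA_comp B (Fintype.equivFin R).symm v t h⟩

lemma derived_isLA {N k t : ℕ} (ht : 2 ≤ t) (v : Fin k → ℕ) (c : Fin k)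
    (A : Fin N → Fin k → ℕ) (hLA : isLA A v t) (x : ℕ) (hx : x < v c) :
    isLA (fun (r : {r : Fin N // A r c = x}) (j : {j : Fin k // j ≠ c}) => A r.1 j.1)
      (fun j => v j.1) (t - 1) := by
  classical
  set emb : {j : Fin k // j ≠ c} ↪ Fin k := ⟨Subtype.val, Subtype.val_injective⟩ with hemb
  set liftI : Finset {j : Fin k // j ≠ c} → Finset (Fin k) :=
    fun I' => insert c (I'.map emb) with hliftI
  set liftσ : ({j : Fin k // j ≠ c} → ℕ) → (Fin k → ℕ) :=
    fun σ' j => if h : j = c then x else σ' ⟨j, h⟩ with hliftσ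
  have hcnot : ∀ I' : Finset {j : Fin k // j ≠ c}, c ∉ I'.map emb := by
    intro I' hc
    obtain ⟨a, _, ha⟩ := Finset.mem_map.mp hc
    exact a.2 ha
  have hcard : ∀ I' : Finset {j : Fin k // j ≠ c}, (liftI I').card = I'.card + 1 := by
    intro I'
    rw [hliftI]
    simp [Finset.card_insert_of_notMem (hcnot I')]
  have hint : ∀ I' σ', isInter (fun j : {j : Fin k // j ≠ c} => v j.1) (t-1) I' σ' →
      isInter v t (liftI I') (liftσ σ') := by
    rintro I' σ' ⟨hc1, hc2⟩
    constructor
    · rw [hcard, hc1]; omega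
    · intro i hi
      rcases Finset.mem_insert.mp hi with h | h
      · subst h; simp [hliftσ, hx]
      · obtain ⟨a, ha, rfl⟩ := Finset.mem_map.mp h
        simp only [hliftσ, hemb, Function.Embedding.coeFn_mk, dif_neg a.2]
        simpa using hc2 a ha
  have hmem : ∀ (I' : Finset {j : Fin k // j ≠ c}) σ' (r : Fin N),
      r ∈ rowsOf A (liftI I') (liftσ σ') ↔ (A r c = x ∧ ∀ j ∈ I', A r j.1 = σ' j) := by
    intro I' σ' r
    rw [mem_rowsOf]
    constructor
    · intro h
      refine ⟨?_, ?_⟩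
      · have := h c (Finset.mem_insert_self _ _)
        simpa [hliftσ] using this
      · intro j hj
        have := h j.1 (Finset.mem_insert_of_mem (Finset.mem_map.mpr ⟨j, hj, rfl⟩))
        simpa [hliftσ, dif_neg j.2] using this
    · rintro ⟨h1, h2⟩ i hi
      rcases Finset.mem_insert.mp hi with h | h
      · subst h; simpa [hliftσ] using h1
      · obtain ⟨a, ha, rfl⟩ := Finset.mem_map.mp h
        simp only [hliftσ, hemb, Function.Embedding.coeFn_mk, dif_neg a.2]
        simpa using h2 a ha
  constructor
  · -- MCA
    rintro I' σ' hI'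
    obtain ⟨r, hr⟩ := hLA.1 _ _ (hint I' σ' hI')
    rw [hmem] at hr
    refine ⟨⟨r, hr.1⟩, ?_⟩
    rw [mem_rowsOf]
    exact hr.2
  · -- locating
    rintro I₁ σ₁ I₂ σ₂ h₁ h₂ heq
    have hrows : rowsOf A (liftI I₁) (liftσ σ₁) = rowsOf A (liftI I₂) (liftσ σ₂) := by
      ext r
      rw [hmem, hmem]
      constructor
      · rintro ⟨h1, h2⟩
        refine ⟨h1, ?_⟩
        have : (⟨r, h1⟩ : {r : Fin N // A r c = x}) ∈
            rowsOf (fun (r : {r : Fin N // A r c = x}) (j : {j : Fin k // j ≠ c}) => A r.1 j.1) I₂ σ₂ := by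
          rw [← heq, mem_rowsOf]; exact h2
        rw [mem_rowsOf] at this; exact this
      · rintro ⟨h1, h2⟩
        refine ⟨h1, ?_⟩
        have : (⟨r, h1⟩ : {r : Fin N // A r c = x}) ∈
            rowsOf (fun (r : {r : Fin N // A r c = x}) (j : {j : Fin k // j ≠ c}) => A r.1 j.1) I₁ σ₁ := by
          rw [heq, mem_rowsOf]; exact h2
        rw [mem_rowsOf] at this; exact this
    obtain ⟨hIeq, hσeq⟩ := hLA.2 _ _ _ _ (hint I₁ σ₁ h₁) (hint I₂ σ₂ h₂) hrows
    have hI : I₁ = I₂ := by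
      ext j
      have hmemI : ∀ I' : Finset {j : Fin k // j ≠ c}, j ∈ I' ↔ j.1 ∈ liftI I' := by
        intro I'
        rw [hliftI]
        simp only [Finset.mem_insert, Finset.mem_map]
        constructor
        · intro h; exact Or.inr ⟨j, h, rfl⟩
        · rintro (h | ⟨a, ha, hav⟩)
          · exact absurd h j.2
          · have : a = j := Subtype.ext hav
            exact this ▸ ha
      rw [hmemI I₁, hmemI I₂, hIeq]
    refine ⟨hI, ?_⟩
    intro j hj
    have hjl : j.1 ∈ liftI I₁ :=
      Finset.mem_insert_of_mem (Finset.mem_map.mpr ⟨j, hj, rfl⟩)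
    have := hσeq j.1 hjl
    simpa [hliftσ, dif_neg j.2] using this

/-- Derivation: for each symbol `x` of column `c`, the rows of a `(1-bar,t)`-locating array
with `x` in column `c`, with column `c` deleted, form a `(1-bar,t-1)`-locating array; hence
`N ≥ v_c * LAN` of the derived type. -/
theorem stmt_10 {N k t : ℕ} (ht : 2 ≤ t) (htk : t ≤ k) (v : Fin k → ℕ) (c : Fin k)
    (A : Fin N → Fin k → ℕ) (hA : ∀ r j, A r j < v j) (hLA : isLA A v t) :
    (∀ x, x < v c →
      isLA (fun (r : {r : Fin N // A r c = x}) (j : {j : Fin k // j ≠ c}) => A r.1 j.1)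
        (fun j => v j.1) (t - 1)) ∧
    v c * LAN {j : Fin k // j ≠ c} (fun j => v j.1) (t - 1) ≤ N := by
  classical
  have hder := fun x hx => derived_isLA ht v c A hLA x hx
  refine ⟨hder, ?_⟩
  have hcount : N = ∑ x ∈ Finset.range (v c),
      ((Finset.univ : Finset (Fin N)).filter fun r => A r c = x).card := by
    rw [← Finset.card_eq_sum_card_fiberwise (f := fun r => A r c)
      (fun r _ => Finset.mem_range.mpr (hA r c))]
    simp
  have hle : ∀ x ∈ Finset.range (v c),
      LAN {j : Fin k // j ≠ c} (fun j => v j.1) (t - 1) ≤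
        ((Finset.univ : Finset (Fin N)).filter fun r => A r c = x).card := by
    intro x hx
    have hx' := Finset.mem_range.mp hx
    have := LAN_le_card
      (fun (r : {r : Fin N // A r c = x}) (j : {j : Fin k // j ≠ c}) => A r.1 j.1)
      (fun j => v j.1) (t - 1) (fun r j => hA r.1 j.1) (hder x hx')
    rwa [Fintype.card_subtype] at this
  calc v c * LAN {j : Fin k // j ≠ c} (fun j => v j.1) (t - 1)
      = ∑ _x ∈ Finset.range (v c), LAN {j : Fin k // j ≠ c} (fun j => v j.1) (t - 1) := by
        simp [mul_comm]
    _ ≤ ∑ x ∈ Finset.range (v c),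
        ((Finset.univ : Finset (Fin N)).filter fun r => A r c = x).card :=
        Finset.sum_le_sum hle
    _ = N := hcount.symm
end

section
/- If A is a (1̄,t)-locating array with N₁ rows over alphabets (v₁,…,v_k) and B is a mixed covering array of strength t with N₂ rows over alphabets (s₁,…,s_k), then the N₁N₂ × k array whose rows are all coordinatewise pairs ((a_{i1},b_{h1}),…,(a_{ik},b_{hk})) for rows a of A and b of B is a (1̄,t)-locating array over alphabets (v₁s₁,…,v_ks_k). -/
open Finset

lemma keyArith (x y a sv : ℕ) (hy : y < sv) :
    x * sv + y = a ↔ x = a / sv ∧ y = a % sv := by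
  have hs : 0 < sv := lt_of_le_of_lt (Nat.zero_le _) hy
  constructor
  · rintro rfl
    constructor
    · rw [mul_comm x sv, Nat.mul_add_div hs, Nat.div_eq_of_lt hy, Nat.add_zero]
    · rw [mul_comm x sv, Nat.mul_add_mod, Nat.mod_eq_of_lt hy]
  · rintro ⟨rfl, rfl⟩
    rw [mul_comm]
    exact Nat.div_add_mod a sv

/-- Product construction: the coordinatewise product of a `(1-bar,t)`-locating array and a
mixed covering array of strength `t` is a `(1-bar,t)`-locating array (pairs `(a,b)` of
symbols are encoded as `a * s j + b`). -/
theorem stmt_11 {N₁ N₂ k t : ℕ} (v s : Fin k → ℕ)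
    (A : Fin N₁ → Fin k → ℕ) (hA : ∀ r j, A r j < v j)
    (B : Fin N₂ → Fin k → ℕ) (hB : ∀ r j, B r j < s j)
    (hLA : isLA A v t) (hMCA : isMCA B s t) :
    isLA (fun (p : Fin N₁ × Fin N₂) (j : Fin k) => A p.1 j * s j + B p.2 j)
      (fun j => v j * s j) t := by
  set C : Fin N₁ × Fin N₂ → Fin k → ℕ :=
    fun p j => A p.1 j * s j + B p.2 j with hC
  -- positivity of alphabets on interaction columns
  have hpos : ∀ (I : Finset (Fin k)) (σ : Fin k → ℕ),
      isInter (fun j => v j * s j) t I σ → ∀ i ∈ I, 0 < s i := by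
    intro I σ h i hi
    have h2 := h.2 i hi
    rcases Nat.eq_zero_or_pos (s i) with h0 | h0
    · simp [h0] at h2
    · exact h0
  -- decomposition of supports
  have hprod : ∀ (I : Finset (Fin k)) (σ : Fin k → ℕ),
      isInter (fun j => v j * s j) t I σ →
      rowsOf C I σ = rowsOf A I (fun i => σ i / s i) ×ˢ rowsOf B I (fun i => σ i % s i) := by
    intro I σ h
    ext ⟨p, q⟩
    simp only [rowsOf, Finset.mem_filter, Finset.mem_product, Finset.mem_univ, true_and]
    constructor
    · intro hpq
      refine ⟨fun i hi => ?_, fun i hi => ?_⟩ <;>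
      · have := (keyArith (A p i) (B q i) (σ i) (s i) (hB q i)).1 (hpq i hi)
        tauto
    · rintro ⟨h1, h2⟩ i hi
      exact (keyArith (A p i) (B q i) (σ i) (s i) (hB q i)).2 ⟨h1 i hi, h2 i hi⟩
  have hinterA : ∀ (I : Finset (Fin k)) (σ : Fin k → ℕ),
      isInter (fun j => v j * s j) t I σ → isInter v t I (fun i => σ i / s i) := by
    intro I σ h
    refine ⟨h.1, fun i hi => ?_⟩
    have := h.2 i hi
    exact Nat.div_lt_of_lt_mul (by simpa [Nat.mul_comm] using this)
  have hinterB : ∀ (I : Finset (Fin k)) (σ : Fin k → ℕ),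
      isInter (fun j => v j * s j) t I σ → isInter s t I (fun i => σ i % s i) := by
    intro I σ h
    exact ⟨h.1, fun i hi => Nat.mod_lt _ (hpos I σ h i hi)⟩
  constructor
  · -- MCA
    intro I σ h
    rw [hprod I σ h]
    exact (hLA.1 I _ (hinterA I σ h)).product (hMCA I _ (hinterB I σ h))
  · -- locating
    intro I₁ σ₁ I₂ σ₂ h₁ h₂ heq
    rw [hprod I₁ σ₁ h₁, hprod I₂ σ₂ h₂] at heq
    have hS₁ := hLA.1 I₁ _ (hinterA I₁ σ₁ h₁)
    have hT₁ := hMCA I₁ _ (hinterB I₁ σ₁ h₁)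
    have hS₂ := hLA.1 I₂ _ (hinterA I₂ σ₂ h₂)
    have hT₂ := hMCA I₂ _ (hinterB I₂ σ₂ h₂)
    obtain ⟨p₀, hp₀⟩ := hS₁
    obtain ⟨q₀, hq₀⟩ := hT₁
    obtain ⟨p₁, hp₁⟩ := hS₂
    obtain ⟨q₁, hq₁⟩ := hT₂
    have hSeq : rowsOf A I₁ (fun i => σ₁ i / s i) = rowsOf A I₂ (fun i => σ₂ i / s i) := by
      ext p
      constructor <;> intro hp
      · have : (p, q₀) ∈ rowsOf A I₂ (fun i => σ₂ i / s i) ×ˢ rowsOf B I₂ (fun i => σ₂ i % s i) := by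
          rw [← heq]; exact Finset.mem_product.2 ⟨hp, hq₀⟩
        exact (Finset.mem_product.1 this).1
      · have : (p, q₁) ∈ rowsOf A I₁ (fun i => σ₁ i / s i) ×ˢ rowsOf B I₁ (fun i => σ₁ i % s i) := by
          rw [heq]; exact Finset.mem_product.2 ⟨hp, hq₁⟩
        exact (Finset.mem_product.1 this).1
    have hTeq : rowsOf B I₁ (fun i => σ₁ i % s i) = rowsOf B I₂ (fun i => σ₂ i % s i) := by
      ext q
      constructor <;> intro hq
      · have : (p₁, q) ∈ rowsOf A I₂ (fun i => σ₂ i / s i) ×ˢ rowsOf B I₂ (fun i => σ₂ i % s i) := by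
          rw [← heq]; exact Finset.mem_product.2 ⟨hSeq ▸ hp₁, hq⟩
        exact (Finset.mem_product.1 this).2
      · have : (p₀, q) ∈ rowsOf A I₁ (fun i => σ₁ i / s i) ×ˢ rowsOf B I₁ (fun i => σ₁ i % s i) := by
          rw [heq]; exact Finset.mem_product.2 ⟨hSeq.symm ▸ hp₀, hq⟩
        exact (Finset.mem_product.1 this).2
    obtain ⟨hI, hdiv⟩ := hLA.2 I₁ _ I₂ _ (hinterA I₁ σ₁ h₁) (hinterA I₂ σ₂ h₂) hSeq
    refine ⟨hI, fun i hi => ?_⟩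
    have hq₀' : q₀ ∈ rowsOf B I₂ (fun i => σ₂ i % s i) := by rw [← hTeq]; exact hq₀
    simp only [rowsOf, Finset.mem_filter] at hq₀ hq₀'
    have hb₁ : B q₀ i = σ₁ i % s i := hq₀.2 i hi
    have hb₂ : B q₀ i = σ₂ i % s i := hq₀'.2 i (hI ▸ hi)
    have ha := hdiv i hi
    have d₁ := Nat.div_add_mod (σ₁ i) (s i)
    have d₂ := Nat.div_add_mod (σ₂ i) (s i)
    rw [ha] at d₁
    omega
end

section
/- Let e≥0. If A is a (1̄,t)-locating array with N₁ rows over alphabets (v₁,…,v_k), and B is a (1̄,t−1)-locating array with N₂ rows over alphabets (v₁,…,v_{i−1},v_{i+1},…,v_k), then stacking A together with e copies of B — where the j-th copy (j=0,…,e−1) has a constant column with new symbol v_i+j inserted in position i — yields a (1̄,t)-locating array with N₁+eN₂ rows over alphabets (v₁,…,v_{i−1},v_i+e,v_{i+1},…,v_k). -/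
open Finset

theorem stmt_13_aux {N₁ N₂ k t e : ℕ} (ht : 1 ≤ t) (v : Fin k → ℕ) (c : Fin k)
    (A : Fin N₁ → Fin k → ℕ) (hA : ∀ r j, A r j < v j) (hLA : isLA A v t)
    (B : Fin N₂ → {j : Fin k // j ≠ c} → ℕ) (hB : ∀ r j, B r j < v j.1)
    (hLB : isLA B (fun j => v j.1) (t - 1))
    (C : Fin N₁ ⊕ Fin e × Fin N₂ → Fin k → ℕ)
    (hCl : ∀ r i, C (Sum.inl r) i = A r i)
    (hCr : ∀ x r i, C (Sum.inr (x, r)) i = if h : i = c then v c + (x : ℕ) else B r ⟨i, h⟩) :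
    isLA C (Function.update v c (v c + e)) t := by
  classical
  set v' := Function.update v c (v c + e) with hv'
  have hmemA : ∀ (I : Finset (Fin k)) σ (r : Fin N₁),
      r ∈ rowsOf A I σ ↔ ∀ i ∈ I, A r i = σ i := by
    intro I σ r; simp [rowsOf]
  have hmemB : ∀ (J : Finset {j : Fin k // j ≠ c}) τ (r : Fin N₂),
      r ∈ rowsOf B J τ ↔ ∀ j ∈ J, B r j = τ j := by
    intro J τ r; simp [rowsOf]
  have hinl : ∀ (I : Finset (Fin k)) σ (r : Fin N₁),
      Sum.inl r ∈ rowsOf C I σ ↔ ∀ i ∈ I, A r i = σ i := by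
    intro I σ r; simp [rowsOf, hCl]
  have hinr : ∀ (I : Finset (Fin k)) σ (x : Fin e) (r : Fin N₂), c ∈ I →
      (Sum.inr (x, r) ∈ rowsOf C I σ ↔
        (v c + (x : ℕ) = σ c ∧ ∀ j ∈ (I.erase c).subtype (· ≠ c), B r j = σ j.1)) := by
    intro I σ x r hcI
    simp only [rowsOf, Finset.mem_filter, Finset.mem_univ, true_and, hCr]
    constructor
    · intro h
      refine ⟨by simpa using h c hcI, fun j hj => ?_⟩
      have hj' : j.1 ∈ I := (Finset.mem_erase.mp (Finset.mem_subtype.mp hj)).2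
      have := h j.1 hj'
      simpa [j.2] using this
    · rintro ⟨h1, h2⟩ i hi
      by_cases hic : i = c
      · subst hic; simpa using h1
      · have hmem : (⟨i, hic⟩ : {j : Fin k // j ≠ c}) ∈ (I.erase c).subtype (· ≠ c) :=
          Finset.mem_subtype.mpr (Finset.mem_erase.mpr ⟨hic, hi⟩)
        simpa [hic] using h2 ⟨i, hic⟩ hmem
  have hBint : ∀ (I : Finset (Fin k)) σ, isInter v' t I σ → c ∈ I →
      isInter (fun j : {j : Fin k // j ≠ c} => v j.1) (t - 1)
        ((I.erase c).subtype (· ≠ c)) (fun j => σ j.1) := by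
    rintro I σ ⟨hcard, hσ⟩ hcI
    constructor
    · rw [Finset.card_subtype, Finset.filter_eq_self.mpr (fun x hx => (Finset.mem_erase.mp hx).1),
        Finset.card_erase_of_mem hcI, hcard]
    · intro j hj
      have hj' : j.1 ∈ I := (Finset.mem_erase.mp (Finset.mem_subtype.mp hj)).2
      have := hσ j.1 hj'
      simpa [hv', Function.update_apply, j.2] using this
  have hAint : ∀ (I : Finset (Fin k)) σ, isInter v' t I σ → ¬(c ∈ I ∧ v c ≤ σ c) →
      isInter v t I σ := by
    rintro I σ ⟨hcard, hσ⟩ hc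
    push_neg at hc
    refine ⟨hcard, fun i hi => ?_⟩
    by_cases h : i = c
    · subst h; exact hc hi
    · simpa [hv', Function.update_apply, h] using hσ i hi
  constructor
  · -- MCA
    rintro I σ hint
    obtain ⟨hcard, hσ⟩ := hint
    by_cases hc : c ∈ I ∧ v c ≤ σ c
    · obtain ⟨hcI, hvc⟩ := hc
      have hσc : σ c < v c + e := by simpa [hv'] using hσ c hcI
      obtain ⟨r, hr⟩ := hLB.1 _ _ (hBint I σ ⟨hcard, hσ⟩ hcI)
      refine ⟨Sum.inr (⟨σ c - v c, by omega⟩, r), (hinr I σ _ r hcI).mpr ⟨by simp; omega, ?_⟩⟩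
      exact fun j hj => (hmemB _ _ _).mp hr j hj
    · obtain ⟨r, hr⟩ := hLA.1 I σ (hAint I σ ⟨hcard, hσ⟩ hc)
      exact ⟨Sum.inl r, (hinl I σ r).mpr ((hmemA _ _ _).mp hr)⟩
  · -- locating
    have mixed : ∀ (I₁ : Finset (Fin k)) σ₁ I₂ σ₂, isInter v' t I₁ σ₁ →
        ¬(c ∈ I₁ ∧ v c ≤ σ₁ c) → (c ∈ I₂ ∧ v c ≤ σ₂ c) →
        rowsOf C I₁ σ₁ = rowsOf C I₂ σ₂ → False := by
      rintro I₁ σ₁ I₂ σ₂ h₁ hc₁ ⟨hcI₂, hvc₂⟩ heq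
      obtain ⟨r, hr⟩ := hLA.1 I₁ σ₁ (hAint I₁ σ₁ h₁ hc₁)
      have : Sum.inl r ∈ rowsOf C I₂ σ₂ := by
        rw [← heq]; exact (hinl I₁ σ₁ r).mpr ((hmemA _ _ _).mp hr)
      have hrc := (hinl I₂ σ₂ r).mp this c hcI₂
      have := hA r c
      omega
    intro I₁ σ₁ I₂ σ₂ h₁ h₂ heq
    by_cases hc₁ : c ∈ I₁ ∧ v c ≤ σ₁ c <;> by_cases hc₂ : c ∈ I₂ ∧ v c ≤ σ₂ c
    · -- both type B
      obtain ⟨hcI₁, hvc₁⟩ := hc₁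
      obtain ⟨hcI₂, hvc₂⟩ := hc₂
      have hσc₁ : σ₁ c < v c + e := by simpa [hv'] using h₁.2 c hcI₁
      set x₁ : Fin e := ⟨σ₁ c - v c, by omega⟩ with hx₁
      have hxc1 : v c + (x₁ : ℕ) = σ₁ c := by simp [hx₁]; omega
      obtain ⟨r₁, hr₁⟩ := hLB.1 _ _ (hBint I₁ σ₁ h₁ hcI₁)
      have m1 : Sum.inr (x₁, r₁) ∈ rowsOf C I₂ σ₂ := by
        rw [← heq]
        exact (hinr I₁ σ₁ x₁ r₁ hcI₁).mpr ⟨hxc1, fun j hj => (hmemB _ _ _).mp hr₁ j hj⟩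
      have hxc2 : v c + (x₁ : ℕ) = σ₂ c := ((hinr I₂ σ₂ x₁ r₁ hcI₂).mp m1).1
      have hBeq : rowsOf B ((I₁.erase c).subtype (· ≠ c)) (fun j => σ₁ j.1)
          = rowsOf B ((I₂.erase c).subtype (· ≠ c)) (fun j => σ₂ j.1) := by
        ext r
        rw [hmemB, hmemB]
        constructor
        · intro h
          have : Sum.inr (x₁, r) ∈ rowsOf C I₂ σ₂ := by
            rw [← heq]; exact (hinr I₁ σ₁ x₁ r hcI₁).mpr ⟨hxc1, h⟩
          exact ((hinr I₂ σ₂ x₁ r hcI₂).mp this).2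
        · intro h
          have : Sum.inr (x₁, r) ∈ rowsOf C I₁ σ₁ := by
            rw [heq]; exact (hinr I₂ σ₂ x₁ r hcI₂).mpr ⟨hxc2, h⟩
          exact ((hinr I₁ σ₁ x₁ r hcI₁).mp this).2
      obtain ⟨hJ, hσ'⟩ := hLB.2 _ _ _ _ (hBint I₁ σ₁ h₁ hcI₁) (hBint I₂ σ₂ h₂ hcI₂) hBeq
      constructor
      · ext i
        by_cases hic : i = c
        · subst hic; simp [hcI₁, hcI₂]
        · constructor
          · intro hi
            have : (⟨i, hic⟩ : {j : Fin k // j ≠ c}) ∈ (I₁.erase c).subtype (· ≠ c) :=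
              Finset.mem_subtype.mpr (Finset.mem_erase.mpr ⟨hic, hi⟩)
            rw [hJ] at this
            exact (Finset.mem_erase.mp (Finset.mem_subtype.mp this)).2
          · intro hi
            have : (⟨i, hic⟩ : {j : Fin k // j ≠ c}) ∈ (I₂.erase c).subtype (· ≠ c) :=
              Finset.mem_subtype.mpr (Finset.mem_erase.mpr ⟨hic, hi⟩)
            rw [← hJ] at this
            exact (Finset.mem_erase.mp (Finset.mem_subtype.mp this)).2
      · intro i hi
        by_cases hic : i = c
        · subst hic; omega
        · have : (⟨i, hic⟩ : {j : Fin k // j ≠ c}) ∈ (I₁.erase c).subtype (· ≠ c) :=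
            Finset.mem_subtype.mpr (Finset.mem_erase.mpr ⟨hic, hi⟩)
          exact hσ' ⟨i, hic⟩ this
    · exact absurd heq.symm (fun h => mixed I₂ σ₂ I₁ σ₁ h₂ hc₂ hc₁ h)
    · exact absurd heq (fun h => mixed I₁ σ₁ I₂ σ₂ h₁ hc₁ hc₂ h)
    · -- both type A
      have hAeq : rowsOf A I₁ σ₁ = rowsOf A I₂ σ₂ := by
        ext r
        rw [hmemA, hmemA, ← hinl, ← hinl, heq]
      exact hLA.2 I₁ σ₁ I₂ σ₂ (hAint I₁ σ₁ h₁ hc₁) (hAint I₂ σ₂ h₂ hc₂) hAeq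

/-- Roux-type construction: stacking a `(1-bar,t)`-locating array `A` with `e` copies of a
`(1-bar,t-1)`-locating array `B`, the `x`-th copy having a constant column with the new
symbol `v_c + x` inserted at position `c`, yields a `(1-bar,t)`-locating array with `v_c`
replaced by `v_c + e`. -/
theorem stmt_13 {N₁ N₂ k t e : ℕ} (ht : 1 ≤ t) (v : Fin k → ℕ) (c : Fin k)
    (A : Fin N₁ → Fin k → ℕ) (hA : ∀ r j, A r j < v j) (hLA : isLA A v t)
    (B : Fin N₂ → {j : Fin k // j ≠ c} → ℕ) (hB : ∀ r j, B r j < v j.1)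
    (hLB : isLA B (fun j => v j.1) (t - 1)) :
    isLA (fun (r : Fin N₁ ⊕ Fin e × Fin N₂) (i : Fin k) =>
        match r with
        | Sum.inl r => A r i
        | Sum.inr (x, r) => if h : i = c then v c + (x : ℕ) else B r ⟨i, h⟩)
      (Function.update v c (v c + e)) t := by
  exact stmt_13_aux ht v c A hA hLA B hB hLB _ (fun _ _ => rfl) (fun _ _ _ => rfl)
end

section
/- Let v₁<v₂<⋯<v_{t+1} with alphabet sizes all at least 2. A pairwise-distinct-index mixed orthogonal array PDIMOA*(∏_{i=2}^{t+1} v_i; t, t+1, (v₁,…,v_{t+1})) exists if and only if v₁ divides v_i for every 2≤i≤t+1. -/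
open Finset

/-- Mixed orthogonal array with pairwise distinct indices, one index equal to 1. -/
def isPDIMOAstar {R ι : Type*} [Fintype R] [DecidableEq ι] (A : R → ι → ℕ)
    (v : ι → ℕ) (t : ℕ) : Prop :=
  ∃ lam : Finset ι → ℕ,
    (∀ I σ, isInter v t I σ → (rowsOf A I σ).card = lam I) ∧
    (∀ I J : Finset ι, I.card = t → J.card = t → I ≠ J → lam I ≠ lam J) ∧
    (∃ S : Finset ι, S.card = t ∧ lam S = 1)

lemma sum_partition {n N : ℕ} (A : Fin N → Fin n → ℕ) (v : Fin n → ℕ)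
    (hA : ∀ r j, A r j < v j) (I : Finset (Fin n)) (lam : ℕ)
    (hlam : ∀ σ : Fin n → ℕ, (∀ i ∈ I, σ i < v i) → (rowsOf A I σ).card = lam) :
    N = (∏ i ∈ I, v i) * lam := by
  classical
  set T : Finset (Fin n → ℕ) :=
    Fintype.piFinset (fun i => if i ∈ I then Finset.range (v i) else {0}) with hT
  have hmem : ∀ r : Fin N, (fun i => if i ∈ I then A r i else 0) ∈ T := by
    intro r
    rw [hT, Fintype.mem_piFinset]
    intro i
    by_cases h : i ∈ I <;> simp [h, hA r i]
  have hfib : ∀ σ ∈ T, (Finset.univ.filter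
      fun r : Fin N => (fun i => if i ∈ I then A r i else 0) = σ) = rowsOf A I σ := by
    intro σ hσ
    rw [hT, Fintype.mem_piFinset] at hσ
    ext r
    simp only [Finset.mem_filter, Finset.mem_univ, true_and, rowsOf, funext_iff]
    constructor
    · intro h i hi
      have := h i
      simpa [hi] using this
    · intro h i
      by_cases hi : i ∈ I
      · simpa [hi] using h i hi
      · have := hσ i
        simp [hi] at this ⊢
        omega
  have hcard : (Finset.univ : Finset (Fin N)).card = ∑ σ ∈ T,
      (Finset.univ.filter fun r : Fin N => (fun i => if i ∈ I then A r i else 0) = σ).card :=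
    Finset.card_eq_sum_card_fiberwise (fun r _ => hmem r)
  have hTcard : T.card = ∏ i ∈ I, v i := by
    rw [hT, Fintype.card_piFinset]
    have : ∀ i : Fin n, (if i ∈ I then Finset.range (v i) else ({0} : Finset ℕ)).card
        = if i ∈ I then v i else 1 := by
      intro i; by_cases h : i ∈ I <;> simp [h]
    rw [Finset.prod_congr rfl fun i _ => this i, Finset.prod_ite_mem, Finset.univ_inter]
  calc N = (Finset.univ : Finset (Fin N)).card := by simp
    _ = ∑ σ ∈ T, (Finset.univ.filter
        fun r : Fin N => (fun i => if i ∈ I then A r i else 0) = σ).card := hcard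
    _ = ∑ σ ∈ T, lam := by
        apply Finset.sum_congr rfl
        intro σ hσ
        rw [hfib σ hσ]
        apply hlam
        intro i hi
        rw [hT, Fintype.mem_piFinset] at hσ
        have := hσ i
        simp [hi] at this
        exact this
    _ = T.card * lam := by rw [Finset.sum_const, smul_eq_mul]
    _ = (∏ i ∈ I, v i) * lam := by rw [hTcard]


lemma tset_char {t : ℕ} (I : Finset (Fin (t + 1))) (hI : I.card = t) :
    ∃ j, I = Finset.univ.erase j := by
  have h1 : Iᶜ.card = 1 := by
    rw [Finset.card_compl, Fintype.card_fin, hI]; omega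
  obtain ⟨j, hj⟩ := Finset.card_eq_one.mp h1
  refine ⟨j, ?_⟩
  have := congrArg (·ᶜ) hj
  simp only [compl_compl] at this
  rw [this, Finset.compl_singleton]

lemma mod_shift_iff (d c a x : ℕ) (hd : 0 < d) (ha : a < d) :
    (c + x) % d = a ↔ x % d = (a + (d - c % d)) % d := by
  have hle : c % d ≤ d := (Nat.mod_lt c hd).le
  have hdm := Nat.div_add_mod c d
  have hcd : c + (d - c % d) = d * (c / d) + d := by omega
  constructor
  · intro h
    have h1 : x % d = (c + x + (d - c % d)) % d := by
      rw [show c + x + (d - c % d) = x + d * (c/d) + d by omega]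
      simp [Nat.add_mul_mod_self_left, Nat.add_mod_right]
    rw [h1, ← Nat.mod_add_mod, h]
  · intro h
    have h1 : (c + x) % d = (c + x % d) % d := by
      conv_lhs => rw [← Nat.div_add_mod x d]
      rw [show c + (d * (x/d) + x % d) = c + x % d + d * (x/d) by ring]
      simp [Nat.add_mul_mod_self_left]
    rw [h1, h, Nat.add_mod_mod,
      show c + (a + (d - c % d)) = a + d * (c/d) + d by omega]
    simp [Nat.add_mul_mod_self_left, Nat.add_mod_right, Nat.mod_eq_of_lt ha]

lemma count_mod (d c a m : ℕ) (hd : 0 < d) (ha : a < d) (hdm : d ∣ m) :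
    ((Finset.range m).filter fun x => (c + x) % d = a).card = m / d := by
  obtain ⟨q, rfl⟩ := hdm
  rw [Nat.mul_div_cancel_left _ hd]
  set b := (a + (d - c % d)) % d with hb
  have hbd : b < d := Nat.mod_lt _ hd
  have heq : ((Finset.range (d * q)).filter fun x => (c + x) % d = a)
      = (Finset.range (d * q)).filter fun x => x % d = b := by
    apply Finset.filter_congr
    intro x _
    exact mod_shift_iff d c a x hd ha
  have key : ((Finset.range (d * q)).filter fun x => x % d = b).card
      = (Finset.range q).card := by
    apply Finset.card_bij' (fun x _ => x / d) (fun y _ => y * d + b)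
    · intro x hx
      simp only [Finset.mem_filter, Finset.mem_range] at hx ⊢
      exact Nat.div_lt_of_lt_mul (by omega)
    · intro y hy
      simp only [Finset.mem_range] at hy
      simp only [Finset.mem_filter, Finset.mem_range]
      refine ⟨?_, ?_⟩
      · calc y * d + b < y * d + d := by omega
          _ = (y+1) * d := by ring
          _ ≤ q * d := Nat.mul_le_mul_right _ (by omega)
          _ = d * q := by ring
      · rw [add_comm, Nat.add_mul_mod_self_right, Nat.mod_eq_of_lt hbd]
    · intro x hx
      simp only [Finset.mem_filter] at hx
      have h2 := Nat.div_add_mod x d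
      rw [mul_comm]; omega
    · intro y hy
      rw [mul_comm y d, Nat.mul_add_div hd, Nat.div_eq_of_lt hbd, add_zero]
  rw [heq, key, Finset.card_range]

lemma compl_erase_univ {t : ℕ} (j : Fin (t + 1)) :
    ((Finset.univ.erase j)ᶜ : Finset (Fin (t + 1))) = {j} := by
  rw [Finset.compl_erase, Finset.compl_univ]
  simp

lemma construction {t : ℕ} (v : Fin (t + 1) → ℕ) (h2 : ∀ i, 2 ≤ v i) (hs : StrictMono v)
    (hdvd : ∀ i, v 0 ∣ v i) :
    ∃ A : Fin (∏ i ∈ Finset.univ.filter (fun i : Fin (t + 1) => i ≠ 0), v i) →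
        Fin (t + 1) → ℕ,
      (∀ r j, A r j < v j) ∧ isPDIMOAstar A v t := by
  classical
  have hv0 : 0 < v 0 := by have := h2 0; omega
  set N := ∏ i ∈ Finset.univ.filter (fun i : Fin (t + 1) => i ≠ 0), v i with hNdef
  have hNe : N = ∏ j : Fin t, v j.succ := by
    rw [hNdef, Finset.filter_ne']
    apply Nat.eq_of_mul_eq_mul_left hv0
    rw [Finset.mul_prod_erase _ _ (Finset.mem_univ 0), Fin.prod_univ_succ]
  set P := ∀ j : Fin t, Fin (v j.succ) with hPdef
  have hcardP : Fintype.card P = N := by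
    show Fintype.card (∀ j : Fin t, Fin (v j.succ)) = N
    rw [Fintype.card_pi, hNe]
    simp
  set e : Fin N ≃ P := (Fintype.equivFinOfCardEq hcardP).symm with he
  set B : P → Fin (t + 1) → ℕ :=
    fun p i => Fin.cases ((∑ j, ((p j : ℕ))) % v 0) (fun j => ((p j : ℕ))) i with hB
  have hB0 : ∀ p : P, B p 0 = (∑ j, ((p j : ℕ))) % v 0 := fun p => rfl
  have hBs : ∀ (p : P) (j : Fin t), B p j.succ = (p j : ℕ) := fun p j => rfl
  -- transfer of counting through e
  have htrans : ∀ (I : Finset (Fin (t+1))) (σ : Fin (t+1) → ℕ),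
      (rowsOf (fun r => B (e r)) I σ).card
        = (Finset.univ.filter fun p : P => ∀ i ∈ I, B p i = σ i).card := by
    intro I σ
    apply Finset.card_bij' (fun r _ => e r) (fun p _ => e.symm p)
    · intro r hr
      simp only [rowsOf, Finset.mem_filter, Finset.mem_univ, true_and] at hr ⊢
      exact hr
    · intro p hp
      simp only [rowsOf, Finset.mem_filter, Finset.mem_univ, true_and,
        Equiv.apply_symm_apply] at hp ⊢
      exact hp
    · intro r _; exact e.symm_apply_apply r
    · intro p _; exact e.apply_symm_apply p
  -- main counting
  have hmain : ∀ (I : Finset (Fin (t+1))) (σ : Fin (t+1) → ℕ), isInter v t I σ →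
      (Finset.univ.filter fun p : P => ∀ i ∈ I, B p i = σ i).card
        = (∏ i ∈ Iᶜ, v i) / v 0 := by
    rintro I σ ⟨hIcard, hσ⟩
    obtain ⟨j0, rfl⟩ := tset_char I hIcard
    rw [compl_erase_univ, Finset.prod_singleton]
    induction j0 using Fin.cases with
    | zero =>
      rw [Nat.div_self hv0]
      have hb : ∀ j : Fin t, σ j.succ < v j.succ := by
        intro j
        exact hσ j.succ (Finset.mem_erase.mpr ⟨Fin.succ_ne_zero j, Finset.mem_univ _⟩)
      apply Finset.card_eq_one.mpr
      refine ⟨fun j => ⟨σ j.succ, hb j⟩, ?_⟩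
      ext p
      simp only [Finset.mem_filter, Finset.mem_univ, true_and, Finset.mem_singleton]
      constructor
      · intro h
        funext j
        apply Fin.ext
        have := h j.succ (Finset.mem_erase.mpr ⟨Fin.succ_ne_zero j, Finset.mem_univ _⟩)
        rw [hBs] at this
        exact this
      · rintro rfl i hi
        obtain ⟨hne, -⟩ := Finset.mem_erase.mp hi
        obtain ⟨j, rfl⟩ := Fin.eq_succ_of_ne_zero hne
        rw [hBs]
    | succ k =>
      have h0mem : (0 : Fin (t+1)) ∈ Finset.univ.erase k.succ :=
        Finset.mem_erase.mpr ⟨(Fin.succ_ne_zero k).symm, Finset.mem_univ _⟩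
      have hσ0 : σ 0 < v 0 := hσ 0 h0mem
      have hjb : ∀ j : Fin t, j ≠ k → σ j.succ < v j.succ := by
        intro j hj
        exact hσ j.succ (Finset.mem_erase.mpr ⟨by simpa [Fin.succ_inj] using hj,
          Finset.mem_univ _⟩)
      set c := ∑ j ∈ Finset.univ.erase k, σ j.succ with hc
      have hcond : ∀ p : P, (∀ i ∈ Finset.univ.erase k.succ, B p i = σ i) ↔
          ((∀ j ∈ Finset.univ.erase k, (p j : ℕ) = σ j.succ)
            ∧ (c + (p k : ℕ)) % v 0 = σ 0) := by
        intro p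
        constructor
        · intro h
          have hj : ∀ j ∈ Finset.univ.erase k, (p j : ℕ) = σ j.succ := by
            intro j hjm
            obtain ⟨hne, -⟩ := Finset.mem_erase.mp hjm
            have := h j.succ (Finset.mem_erase.mpr ⟨by simpa [Fin.succ_inj] using hne,
              Finset.mem_univ _⟩)
            rwa [hBs] at this
          refine ⟨hj, ?_⟩
          have h0 := h 0 h0mem
          rw [hB0] at h0
          have hsum : (∑ j, ((p j : ℕ))) = c + (p k : ℕ) := by
            rw [← Finset.add_sum_erase _ _ (Finset.mem_univ k), hc,
              Finset.sum_congr rfl hj, add_comm]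
          rwa [hsum] at h0
        · rintro ⟨hj, h0⟩ i hi
          obtain ⟨hne, -⟩ := Finset.mem_erase.mp hi
          induction i using Fin.cases with
          | zero =>
            rw [hB0]
            have hsum : (∑ j, ((p j : ℕ))) = c + (p k : ℕ) := by
              rw [← Finset.add_sum_erase _ _ (Finset.mem_univ k), hc,
                Finset.sum_congr rfl hj, add_comm]
            rwa [hsum]
          | succ j =>
            rw [hBs]
            exact hj j (Finset.mem_erase.mpr ⟨by simpa [Fin.succ_inj] using hne,
              Finset.mem_univ _⟩)
      have hfe : (Finset.univ.filter fun p : P => ∀ i ∈ Finset.univ.erase k.succ, B p i = σ i)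
          = Finset.univ.filter fun p : P =>
              ((∀ j ∈ Finset.univ.erase k, (p j : ℕ) = σ j.succ)
                ∧ (c + (p k : ℕ)) % v 0 = σ 0) := by
        apply Finset.filter_congr
        intro p _
        exact hcond p
      rw [hfe]
      have hbij : (Finset.univ.filter fun p : P =>
              ((∀ j ∈ Finset.univ.erase k, (p j : ℕ) = σ j.succ)
                ∧ (c + (p k : ℕ)) % v 0 = σ 0)).card
          = ((Finset.range (v k.succ)).filter fun x => (c + x) % v 0 = σ 0).card := by
        refine Finset.card_bij' (fun p _ => ((p k : ℕ)))
          (fun x _ => Function.update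
            (fun j => (⟨σ j.succ % v j.succ,
              Nat.mod_lt _ (by have := h2 j.succ; omega)⟩ : Fin (v j.succ))) k
            (⟨x % v k.succ, Nat.mod_lt _ (by have := h2 k.succ; omega)⟩ : Fin (v k.succ)))
          ?_ ?_ ?_ ?_
        · intro p hp
          simp only [Finset.mem_filter, Finset.mem_univ, true_and] at hp
          simp only [Finset.mem_filter, Finset.mem_range]
          exact ⟨(p k).isLt, hp.2⟩
        · intro x hx
          simp only [Finset.mem_filter, Finset.mem_range] at hx
          simp only [Finset.mem_filter, Finset.mem_univ, true_and]
          constructor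
          · intro j hjm
            obtain ⟨hne, -⟩ := Finset.mem_erase.mp hjm
            rw [Function.update_of_ne hne]
            exact Nat.mod_eq_of_lt (hjb j hne)
          · rw [Function.update_self]
            show (c + x % v k.succ) % v 0 = σ 0
            rw [Nat.mod_eq_of_lt hx.1]
            exact hx.2
        · intro p hp
          simp only [Finset.mem_filter, Finset.mem_univ, true_and] at hp
          funext j
          by_cases hj : j = k
          · subst hj
            beta_reduce
            rw [Function.update_self]
            apply Fin.ext
            show ((p j : ℕ) % v j.succ) = (p j : ℕ)
            exact Nat.mod_eq_of_lt (p j).isLt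
          · beta_reduce
            rw [Function.update_of_ne hj]
            apply Fin.ext
            show (σ j.succ % v j.succ) = (p j : ℕ)
            rw [Nat.mod_eq_of_lt (hjb j hj)]
            exact (hp.1 j (Finset.mem_erase.mpr ⟨hj, Finset.mem_univ _⟩)).symm
        · intro x hx
          simp only [Finset.mem_filter, Finset.mem_range] at hx
          beta_reduce
          rw [Function.update_self]
          show (x % v k.succ) = x
          exact Nat.mod_eq_of_lt hx.1
      rw [hbij]
      exact count_mod (v 0) c (σ 0) (v k.succ) hv0 hσ0 (hdvd k.succ)
  -- assemble
  refine ⟨fun r => B (e r), ?_, ?_⟩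
  · intro r i
    induction i using Fin.cases with
    | zero =>
      show B (e r) 0 < v 0
      rw [hB0]; exact Nat.mod_lt _ hv0
    | succ j =>
      show B (e r) j.succ < v j.succ
      rw [hBs]; exact (e r j).isLt
  · refine ⟨fun I => (∏ i ∈ Iᶜ, v i) / v 0, ?_, ?_, ?_⟩
    · intro I σ hint
      rw [htrans]
      exact hmain I σ hint
    · intro I J hIc hJc hne
      obtain ⟨j, rfl⟩ := tset_char I hIc
      obtain ⟨j', rfl⟩ := tset_char J hJc
      show (∏ i ∈ (Finset.univ.erase j)ᶜ, v i) / v 0 ≠ (∏ i ∈ (Finset.univ.erase j')ᶜ, v i) / v 0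
      rw [compl_erase_univ, compl_erase_univ, Finset.prod_singleton, Finset.prod_singleton]
      intro heq
      apply hne
      have : v j = v j' := by
        rw [← Nat.div_mul_cancel (hdvd j), ← Nat.div_mul_cancel (hdvd j'), heq]
      rw [hs.injective this]
    · refine ⟨Finset.univ.erase 0, ?_, ?_⟩
      · rw [Finset.card_erase_of_mem (Finset.mem_univ 0), Finset.card_univ, Fintype.card_fin]
        omega
      · show (∏ i ∈ ((Finset.univ.erase (0 : Fin (t+1)))ᶜ), v i) / v 0 = 1
        rw [compl_erase_univ, Finset.prod_singleton, Nat.div_self hv0]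

/-- For strictly increasing sizes all at least 2, a PDIMOA* of strength `t` on `t+1` factors
with `N = ∏_{i=2}^{t+1} v_i` exists iff `v₁` divides every `v_i`. -/
theorem stmt_14 {t : ℕ} (v : Fin (t + 1) → ℕ) (h2 : ∀ i, 2 ≤ v i) (hs : StrictMono v) :
    (∃ A : Fin (∏ i ∈ Finset.univ.filter (fun i : Fin (t + 1) => i ≠ 0), v i) →
        Fin (t + 1) → ℕ,
      (∀ r j, A r j < v j) ∧ isPDIMOAstar A v t)
    ↔ ∀ i : Fin (t + 1), v 0 ∣ v i := by

  constructor
  · rintro ⟨A, hA, lam, hcount, -, -⟩ i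
    by_cases hi : i = 0
    · subst hi; exact dvd_refl _
    · have hIcard : (Finset.univ.erase i).card = t := by
        rw [Finset.card_erase_of_mem (Finset.mem_univ i), Finset.card_univ, Fintype.card_fin]
        omega
      have hpart := sum_partition A v hA (Finset.univ.erase i) (lam (Finset.univ.erase i))
        (fun σ hσ => hcount _ σ ⟨hIcard, hσ⟩)
      have hNpos : 0 < ∏ i ∈ Finset.univ.filter (fun i : Fin (t + 1) => i ≠ 0), v i :=
        Finset.prod_pos (fun i _ => by have := h2 i; omega)
      have hP0 : v i * ∏ i' ∈ Finset.univ.erase i, v i' = ∏ i', v i' :=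
        Finset.mul_prod_erase _ _ (Finset.mem_univ i)
      have hP1 : (∏ i', v i')
          = v 0 * ∏ i' ∈ Finset.univ.filter (fun i : Fin (t + 1) => i ≠ 0), v i' := by
        rw [Finset.filter_ne']
        exact (Finset.mul_prod_erase _ _ (Finset.mem_univ 0)).symm
      have key : v i * (∏ i' ∈ Finset.univ.filter (fun i : Fin (t + 1) => i ≠ 0), v i')
          = (v 0 * lam (Finset.univ.erase i))
            * ∏ i' ∈ Finset.univ.filter (fun i : Fin (t + 1) => i ≠ 0), v i' := by
        conv_lhs => rw [hpart]
        rw [← mul_assoc, hP0, hP1]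
        ring
      exact ⟨lam (Finset.univ.erase i), Nat.eq_of_mul_eq_mul_right hNpos key⟩
  · intro hdvd
    exact construction v h2 hs hdvd
end

section
/- Let v₁≤v₂≤v₃ with v₂≥2v₁. Define the v₂v₃ × 3 array A by: for i=1,…,v₃ and r=0,…,v₂−1, entry A[i+r·v₃, 1] = (i−1+r) mod v₁; and for i=1,…,v₂v₃, A[i,2] = ⌊(i−1)/v₃⌋ and A[i,3] = (i−1) mod v₃. Then A is a (1̄,2)-locating array LA(v₂v₃; 3, (v₁,v₂,v₃)), and it is optimal (no (1̄,2)-locating array of this type has fewer than v₂v₃ rows). -/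
open Finset

lemma aux_pairs : ∀ I : Finset (Fin 3), I.card = 2 →
    I = {0,1} ∨ I = {0,2} ∨ I = {1,2} := by decide

lemma aux_shift (v₁ x c : ℕ) (hv : 0 < v₁) (hc : c < v₁) : ∃ b < v₁, (b + x) % v₁ = c := by
  refine ⟨(c + (v₁ - x % v₁)) % v₁, Nat.mod_lt _ hv, ?_⟩
  rw [Nat.mod_add_mod]
  have h3 : c + (v₁ - x % v₁) + x = c + v₁ * (x / v₁ + 1) := by
    have h2 := Nat.mod_add_div x v₁
    have h1 : x % v₁ < v₁ := Nat.mod_lt _ hv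
    rw [Nat.mul_add, Nat.mul_one]
    omega
  rw [h3, Nat.add_mul_mod_self_left, Nat.mod_eq_of_lt hc]

lemma aux_lt (a v₂ v₃ b : ℕ) (ha : a < v₂) (hb : b < v₃) : a * v₃ + b < v₂ * v₃ := by
  calc a * v₃ + b < (a+1) * v₃ := by rw [Nat.add_mul, Nat.one_mul]; omega
  _ ≤ v₂ * v₃ := Nat.mul_le_mul_right _ ha

lemma aux_div (a v₃ b : ℕ) (hv : 0 < v₃) (hb : b < v₃) : (a * v₃ + b) / v₃ = a := by
  rw [Nat.add_comm, Nat.add_mul_div_right _ _ hv, Nat.div_eq_of_lt hb, Nat.zero_add]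

lemma aux_mod (a v₃ b : ℕ) (hb : b < v₃) : (a * v₃ + b) % v₃ = b := by
  rw [Nat.add_comm, Nat.add_mul_mod_self_right, Nat.mod_eq_of_lt hb]

/-- The explicit `v₂v₃ × 3` array is an optimal `(1-bar,2)`-locating array of type
`(v₁, v₂, v₃)` whenever `v₁ ≤ v₂ ≤ v₃` and `v₂ ≥ 2v₁`. -/
theorem stmt_15 (v₁ v₂ v₃ : ℕ) (h1 : 2 ≤ v₁) (h12 : v₁ ≤ v₂) (h23 : v₂ ≤ v₃)
    (hd : 2 * v₁ ≤ v₂) :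
    isLA (fun (n : Fin (v₂ * v₃)) (j : Fin 3) =>
        if j = 0 then ((n : ℕ) % v₃ + (n : ℕ) / v₃) % v₁
        else if j = 1 then (n : ℕ) / v₃
        else (n : ℕ) % v₃) ![v₁, v₂, v₃] 2 ∧
    ∀ (N' : ℕ) (B : Fin N' → Fin 3 → ℕ), (∀ r j, B r j < ![v₁, v₂, v₃] j) →
      isLA B ![v₁, v₂, v₃] 2 → v₂ * v₃ ≤ N' := by
  have hv₁ : 0 < v₁ := by omega
  have hv₂ : 0 < v₂ := by omega
  have hv₃ : 0 < v₃ := by omega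
  set A : Fin (v₂ * v₃) → Fin 3 → ℕ := fun n j =>
      if j = 0 then ((n : ℕ) % v₃ + (n : ℕ) / v₃) % v₁
      else if j = 1 then (n : ℕ) / v₃
      else (n : ℕ) % v₃ with hAdef
  have hA0 : ∀ n, A n 0 = ((n : ℕ) % v₃ + (n : ℕ) / v₃) % v₁ := fun n => rfl
  have hA1 : ∀ n, A n 1 = (n : ℕ) / v₃ := fun n => rfl
  have hA2 : ∀ n, A n 2 = (n : ℕ) % v₃ := fun n => rfl
  have hmem : ∀ I σ (n : Fin (v₂ * v₃)), n ∈ rowsOf A I σ ↔ ∀ i ∈ I, A n i = σ i := by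
    intro I σ n; simp [rowsOf]
  have hrow : ∀ a b, a < v₂ → b < v₃ →
      ∃ n : Fin (v₂ * v₃), (n : ℕ) / v₃ = a ∧ (n : ℕ) % v₃ = b := by
    intro a b ha hb
    exact ⟨⟨a * v₃ + b, aux_lt a v₂ v₃ b ha hb⟩, aux_div a v₃ b hv₃ hb, aux_mod a v₃ b hb⟩
  -- two distinct rows covering a {0,1}-interaction, same quotient, remainders differ by v₁
  have two01 : ∀ σ : Fin 3 → ℕ, σ 0 < v₁ → σ 1 < v₂ →
      ∃ n m : Fin (v₂ * v₃), n ∈ rowsOf A {0,1} σ ∧ m ∈ rowsOf A {0,1} σ ∧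
        (n : ℕ) % v₃ + v₁ = (m : ℕ) % v₃ ∧ (n : ℕ) / v₃ = (m : ℕ) / v₃ := by
    intro σ hc ha
    obtain ⟨b₀, hb₀, hbc⟩ := aux_shift v₁ (σ 1) (σ 0) hv₁ hc
    obtain ⟨n, hn1, hn2⟩ := hrow (σ 1) b₀ ha (by omega)
    obtain ⟨m, hm1, hm2⟩ := hrow (σ 1) (b₀ + v₁) ha (by omega)
    refine ⟨n, m, ?_, ?_, by omega, by omega⟩
    · rw [hmem]; intro i hi
      simp only [Finset.mem_insert, Finset.mem_singleton] at hi
      rcases hi with rfl | rfl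
      · rw [hA0, hn2, hn1, hbc]
      · rw [hA1, hn1]
    · rw [hmem]; intro i hi
      simp only [Finset.mem_insert, Finset.mem_singleton] at hi
      rcases hi with rfl | rfl
      · rw [hA0, hm2, hm1, show b₀ + v₁ + σ 1 = b₀ + σ 1 + v₁ from by omega,
          Nat.add_mod_right, hbc]
      · rw [hA1, hm1]
  -- two distinct rows covering a {0,2}-interaction, same remainder, quotients differ by v₁
  have two02 : ∀ σ : Fin 3 → ℕ, σ 0 < v₁ → σ 2 < v₃ →
      ∃ n m : Fin (v₂ * v₃), n ∈ rowsOf A {0,2} σ ∧ m ∈ rowsOf A {0,2} σ ∧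
        (n : ℕ) / v₃ + v₁ = (m : ℕ) / v₃ ∧ (n : ℕ) % v₃ = (m : ℕ) % v₃ := by
    intro σ hc hb
    obtain ⟨a₀, ha₀, hac⟩ := aux_shift v₁ (σ 2) (σ 0) hv₁ hc
    obtain ⟨n, hn1, hn2⟩ := hrow a₀ (σ 2) (by omega) hb
    obtain ⟨m, hm1, hm2⟩ := hrow (a₀ + v₁) (σ 2) (by omega) hb
    refine ⟨n, m, ?_, ?_, by omega, by omega⟩
    · rw [hmem]; intro i hi
      simp only [Finset.mem_insert, Finset.mem_singleton] at hi
      rcases hi with rfl | rfl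
      · rw [hA0, hn2, hn1, Nat.add_comm (σ 2) a₀, hac]
      · rw [hA2, hn2]
    · rw [hmem]; intro i hi
      simp only [Finset.mem_insert, Finset.mem_singleton] at hi
      rcases hi with rfl | rfl
      · rw [hA0, hm2, hm1, show σ 2 + (a₀ + v₁) = a₀ + σ 2 + v₁ from by omega,
          Nat.add_mod_right, hac]
      · rw [hA2, hm2]
  have mem12 : ∀ σ : Fin 3 → ℕ, σ 1 < v₂ → σ 2 < v₃ → ∃ n, n ∈ rowsOf A {1,2} σ := by
    intro σ ha hb
    obtain ⟨n, hn1, hn2⟩ := hrow (σ 1) (σ 2) ha hb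
    refine ⟨n, ?_⟩
    rw [hmem]; intro i hi
    simp only [Finset.mem_insert, Finset.mem_singleton] at hi
    rcases hi with rfl | rfl
    · rw [hA1, hn1]
    · rw [hA2, hn2]
  have sub12 : ∀ (σ : Fin 3 → ℕ) (n m : Fin (v₂ * v₃)),
      n ∈ rowsOf A {1,2} σ → m ∈ rowsOf A {1,2} σ → n = m := by
    intro σ n m hn hm
    rw [hmem] at hn hm
    have e1 : (n : ℕ) / v₃ = (m : ℕ) / v₃ := by
      rw [← hA1 n, ← hA1 m, hn 1 (by decide), hm 1 (by decide)]
    have e2 : (n : ℕ) % v₃ = (m : ℕ) % v₃ := by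
      rw [← hA2 n, ← hA2 m, hn 2 (by decide), hm 2 (by decide)]
    apply Fin.ext
    have d1 := Nat.div_add_mod (n : ℕ) v₃
    have d2 := Nat.div_add_mod (m : ℕ) v₃
    rw [e1, e2] at d1
    omega
  have hMCA : isMCA A ![v₁, v₂, v₃] 2 := by
    rintro I σ ⟨hcard, hσ⟩
    rcases aux_pairs I hcard with rfl | rfl | rfl
    · obtain ⟨n, m, hn, -, -, -⟩ := two01 σ (hσ 0 (by decide)) (hσ 1 (by decide))
      exact ⟨n, hn⟩
    · obtain ⟨n, m, hn, -, -, -⟩ := two02 σ (hσ 0 (by decide)) (hσ 2 (by decide))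
      exact ⟨n, hn⟩
    · obtain ⟨n, hn⟩ := mem12 σ (hσ 1 (by decide)) (hσ 2 (by decide))
      exact ⟨n, hn⟩
  have neq0112 : ∀ σ τ : Fin 3 → ℕ, σ 0 < v₁ → σ 1 < v₂ →
      rowsOf A {0,1} σ ≠ rowsOf A {1,2} τ := by
    intro σ τ hc ha h
    obtain ⟨n, m, hn, hm, hr, hq⟩ := two01 σ hc ha
    rw [h] at hn hm
    cases sub12 τ n m hn hm
    omega
  have neq0212 : ∀ σ τ : Fin 3 → ℕ, σ 0 < v₁ → σ 2 < v₃ →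
      rowsOf A {0,2} σ ≠ rowsOf A {1,2} τ := by
    intro σ τ hc hb h
    obtain ⟨n, m, hn, hm, hq, hr⟩ := two02 σ hc hb
    rw [h] at hn hm
    cases sub12 τ n m hn hm
    omega
  have neq0102 : ∀ σ τ : Fin 3 → ℕ, σ 0 < v₁ → σ 1 < v₂ →
      rowsOf A {0,1} σ ≠ rowsOf A {0,2} τ := by
    intro σ τ hc ha h
    obtain ⟨n, m, hn, hm, hr, hq⟩ := two01 σ hc ha
    rw [h, hmem] at hn hm
    have e1 : (n : ℕ) % v₃ = τ 2 := by rw [← hA2 n]; exact hn 2 (by decide)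
    have e2 : (m : ℕ) % v₃ = τ 2 := by rw [← hA2 m]; exact hm 2 (by decide)
    omega
  have hLoc : isLocating A ![v₁, v₂, v₃] 2 := by
    intro I₁ σ₁ I₂ σ₂ h₁ h₂ heq
    have hI : I₁ = I₂ := by
      rcases aux_pairs I₁ h₁.1 with rfl | rfl | rfl <;>
        rcases aux_pairs I₂ h₂.1 with rfl | rfl | rfl
      · rfl
      · exact absurd heq (neq0102 σ₁ σ₂ (h₁.2 0 (by decide)) (h₁.2 1 (by decide)))
      · exact absurd heq (neq0112 σ₁ σ₂ (h₁.2 0 (by decide)) (h₁.2 1 (by decide)))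
      · exact absurd heq.symm (neq0102 σ₂ σ₁ (h₂.2 0 (by decide)) (h₂.2 1 (by decide)))
      · rfl
      · exact absurd heq (neq0212 σ₁ σ₂ (h₁.2 0 (by decide)) (h₁.2 2 (by decide)))
      · exact absurd heq.symm (neq0112 σ₂ σ₁ (h₂.2 0 (by decide)) (h₂.2 1 (by decide)))
      · exact absurd heq.symm (neq0212 σ₂ σ₁ (h₂.2 0 (by decide)) (h₂.2 2 (by decide)))
      · rfl
    subst hI
    refine ⟨rfl, ?_⟩
    obtain ⟨n, hn⟩ := hMCA I₁ σ₁ h₁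
    have hn' : n ∈ rowsOf A I₁ σ₂ := heq ▸ hn
    rw [hmem] at hn hn'
    intro i hi
    rw [← hn i hi, hn' i hi]
  refine ⟨⟨hMCA, hLoc⟩, ?_⟩
  intro N' B hB hLA
  have hfun : ∀ p : Fin v₂ × Fin v₃, ∃ r : Fin N',
      B r 1 = (p.1 : ℕ) ∧ B r 2 = (p.2 : ℕ) := by
    rintro ⟨a, b⟩
    have hint : isInter ![v₁, v₂, v₃] 2 {1,2}
        (fun i => if i = 1 then (a : ℕ) else (b : ℕ)) := by
      refine ⟨by decide, ?_⟩
      intro i hi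
      simp only [Finset.mem_insert, Finset.mem_singleton] at hi
      rcases hi with rfl | rfl
      · simpa using a.isLt
      · simpa using b.isLt
    obtain ⟨r, hr⟩ := hLA.1 _ _ hint
    simp only [rowsOf, Finset.mem_filter, Finset.mem_univ, true_and] at hr
    refine ⟨r, ?_, ?_⟩
    · simpa using hr 1 (by decide)
    · simpa using hr 2 (by decide)
  choose f hf1 hf2 using hfun
  have hinj : Function.Injective f := by
    intro p q hpq
    have e1 : (p.1 : ℕ) = (q.1 : ℕ) := by rw [← hf1 p, ← hf1 q, hpq]
    have e2 : (p.2 : ℕ) = (q.2 : ℕ) := by rw [← hf2 p, ← hf2 q, hpq]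
    exact Prod.ext (Fin.ext e1) (Fin.ext e2)
  calc v₂ * v₃ = Fintype.card (Fin v₂ × Fin v₃) := by simp
    _ ≤ Fintype.card (Fin N') := Fintype.card_le_of_injective f hinj
    _ = N' := by simp
end

section
/- Let 2≤w and v≥2w. Then there exists an optimal (1̄,1)-locating array with v rows, w+1 columns, the first w columns over an alphabet of size w and the last column over an alphabet of size v. Explicitly, with rows indexed 1..2w: rows 1..w are (j−1,…,j−1, j−1) constant rows for j=1..w, row w+m (m=1..w) has entry (m−1+c−1) mod w in column c and w+m−1 in the last column; for v>2w, add v−2w extra rows with arbitrary entries in the first w columns and distinct new symbols 2w,…,v−1 in the last column. -/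
open Finset

lemma mem_rowsOf_singleton {R ι : Type*} [Fintype R] [DecidableEq ι] (A : R → ι → ℕ)
    (i : ι) (σ : ι → ℕ) (r : R) : r ∈ rowsOf A {i} σ ↔ A r i = σ i := by
  simp [rowsOf]

lemma modcalc (w x i : ℕ) (hi : i ≤ w) : ((x + w - i) % w + i) % w = x % w := by
  rw [Nat.mod_add_mod]
  have h : x + w - i + i = x + w := by omega
  rw [h, Nat.add_mod_right]

/-- The explicit `v × (w+1)` array (first `w` columns over an alphabet of size `w`, last
column over an alphabet of size `v`; rows beyond the first `2w` having arbitrary entries in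
the first `w` columns) is an optimal `(1-bar,1)`-locating array of type `(w,…,w,v)`
whenever `2 ≤ w` and `v ≥ 2w`. -/
theorem stmt_16 (w v : ℕ) (hw : 2 ≤ w) (hv : 2 * w ≤ v)
    (g : Fin v → Fin (w + 1) → ℕ) (hg : ∀ r c, g r c < w) :
    isLA (fun (n : Fin v) (c : Fin (w + 1)) =>
        if (c : ℕ) = w then (n : ℕ)
        else if (n : ℕ) < w then (n : ℕ)
        else if (n : ℕ) < 2 * w then ((n : ℕ) - w + (c : ℕ)) % w
        else g n c)
      (fun c => if (c : ℕ) = w then v else w) 1 ∧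
    ∀ (N' : ℕ) (B : Fin N' → Fin (w + 1) → ℕ),
      (∀ r c, B r c < (if (c : ℕ) = w then v else w)) →
      isLA B (fun c => if (c : ℕ) = w then v else w) 1 → v ≤ N' := by
  have hw0 : 0 < w := by omega
  set A : Fin v → Fin (w + 1) → ℕ := fun n c =>
    if (c : ℕ) = w then (n : ℕ)
    else if (n : ℕ) < w then (n : ℕ)
    else if (n : ℕ) < 2 * w then ((n : ℕ) - w + (c : ℕ)) % w
    else g n c with hA
  -- value lemmas
  have hlow : ∀ (x : ℕ) (hx : x < v) (c : Fin (w + 1)), (c : ℕ) ≠ w → x < w →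
      A ⟨x, hx⟩ c = x := by
    intro x hx c hc hxw
    simp [hA, hc, hxw]
  have hmid : ∀ (m : ℕ) (hm : m < w) (c : Fin (w + 1)), (c : ℕ) ≠ w →
      A ⟨w + m, by omega⟩ c = (m + (c : ℕ)) % w := by
    intro m hm c hc
    have h1 : ¬ (w + m < w) := by omega
    have h2 : w + m < 2 * w := by omega
    simp only [hA, hc, if_false, h1, if_false, h2, if_true]
    congr 1
    omega
  have hlast : ∀ (x : ℕ) (hx : x < v) (c : Fin (w + 1)), (c : ℕ) = w →
      A ⟨x, hx⟩ c = x := by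
    intro x hx c hc
    simp [hA, hc]
  constructor
  · constructor
    · -- MCA
      rintro I σ ⟨hcard, hσ⟩
      obtain ⟨i, rfl⟩ := Finset.card_eq_one.mp hcard
      have hσi := hσ i (Finset.mem_singleton_self i)
      by_cases hc : (i : ℕ) = w
      · simp only [hc, if_true] at hσi
        exact ⟨⟨σ i, hσi⟩, (mem_rowsOf_singleton _ _ _ _).mpr (hlast _ _ _ hc)⟩
      · simp only [hc, if_false] at hσi
        have hx : σ i < v := by omega
        exact ⟨⟨σ i, hx⟩, (mem_rowsOf_singleton _ _ _ _).mpr (hlow _ _ _ hc hσi)⟩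
    · -- locating
      rintro I₁ σ₁ I₂ σ₂ ⟨h1c, h1v⟩ ⟨h2c, h2v⟩ heq
      obtain ⟨i, rfl⟩ := Finset.card_eq_one.mp h1c
      obtain ⟨j, rfl⟩ := Finset.card_eq_one.mp h2c
      have ha := h1v i (Finset.mem_singleton_self i)
      have hb := h2v j (Finset.mem_singleton_self j)
      have key : ∀ r : Fin v, A r i = σ₁ i ↔ A r j = σ₂ j := by
        intro r
        rw [← mem_rowsOf_singleton, ← mem_rowsOf_singleton, heq]
      have main : i = j ∧ σ₁ i = σ₂ j := by
        by_cases hi : (i : ℕ) = w <;> by_cases hj : (j : ℕ) = w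
        · -- both last column
          simp only [hi, if_true] at ha
          have h1 : A ⟨σ₁ i, ha⟩ i = σ₁ i := hlast _ _ _ hi
          have h2 := (key _).mp h1
          rw [hlast _ _ _ hj] at h2
          exact ⟨Fin.ext (hi.trans hj.symm), h2⟩
        · -- i last, j not last : contradiction
          exfalso
          simp only [hi, if_true] at ha; simp only [hj, if_false] at hb
          have hbv : σ₂ j < v := by omega
          have h1 : A ⟨σ₂ j, hbv⟩ j = σ₂ j := hlow _ _ _ hj hb
          have h2 := (key _).mpr h1
          rw [hlast _ _ _ hi] at h2
          -- σ₂ j = σ₁ i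
          set m := (σ₂ j + w - (j : ℕ)) % w with hm
          have hmw : m < w := Nat.mod_lt _ hw0
          have hjw : (j : ℕ) ≤ w := by omega
          have h3 : A ⟨w + m, by omega⟩ j = σ₂ j := by
            rw [hmid m hmw j hj, hm, modcalc w (σ₂ j) (j : ℕ) hjw, Nat.mod_eq_of_lt hb]
          have h4 := (key _).mpr h3
          rw [hlast _ _ _ hi] at h4
          omega
        · -- j last, i not last : contradiction
          exfalso
          simp only [hi, if_false] at ha; simp only [hj, if_true] at hb
          have hav : σ₁ i < v := by omega
          have h1 : A ⟨σ₁ i, hav⟩ i = σ₁ i := hlow _ _ _ hi ha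
          have h2 := (key _).mp h1
          rw [hlast _ _ _ hj] at h2
          set m := (σ₁ i + w - (i : ℕ)) % w with hm
          have hmw : m < w := Nat.mod_lt _ hw0
          have hiw : (i : ℕ) ≤ w := by omega
          have h3 : A ⟨w + m, by omega⟩ i = σ₁ i := by
            rw [hmid m hmw i hi, hm, modcalc w (σ₁ i) (i : ℕ) hiw, Nat.mod_eq_of_lt ha]
          have h4 := (key _).mp h3
          rw [hlast _ _ _ hj] at h4
          omega
        · -- both not last
          simp only [hi, if_false] at ha; simp only [hj, if_false] at hb
          have hav : σ₁ i < v := by omega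
          have hiw : (i : ℕ) < w := by
            have := i.isLt; omega
          have hjw : (j : ℕ) < w := by
            have := j.isLt; omega
          have h1 : A ⟨σ₁ i, hav⟩ i = σ₁ i := hlow _ _ _ hi ha
          have h2 := (key _).mp h1
          rw [hlow _ _ _ hj ha] at h2
          -- h2 : σ₁ i = σ₂ j
          set m := (σ₁ i + w - (i : ℕ)) % w with hm
          have hmw : m < w := Nat.mod_lt _ hw0
          have h3 : A ⟨w + m, by omega⟩ i = σ₁ i := by
            rw [hmid m hmw i hi, hm, modcalc w (σ₁ i) (i : ℕ) (le_of_lt hiw),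
              Nat.mod_eq_of_lt ha]
          have h4 := (key _).mp h3
          rw [hmid m hmw j hj] at h4
          -- h4 : (m + j) % w = σ₂ j, and (m + i) % w = σ₁ i = σ₂ j
          have h5 : (m + (i : ℕ)) % w = (m + (j : ℕ)) % w := by
            rw [hmid m hmw i hi] at h3
            rw [h3, h4, h2]
          have h6 : (i : ℕ) % w = (j : ℕ) % w := Nat.ModEq.add_left_cancel' m h5
          rw [Nat.mod_eq_of_lt hiw, Nat.mod_eq_of_lt hjw] at h6
          exact ⟨Fin.ext h6, h2⟩
      refine ⟨by rw [main.1], ?_⟩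
      intro i' hi'
      rw [Finset.mem_singleton] at hi'
      subst hi'
      rw [main.2, main.1]
  · -- lower bound
    intro N' B hB hLA'
    have hM := hLA'.1
    have key : ∀ s : Fin v, ∃ r : Fin N', B r (Fin.last w) = (s : ℕ) := by
      intro s
      have hI : isInter (fun c : Fin (w + 1) => if (c : ℕ) = w then v else w) 1
          {Fin.last w} (fun _ => (s : ℕ)) := by
        refine ⟨Finset.card_singleton _, ?_⟩
        intro i hi
        rw [Finset.mem_singleton] at hi
        subst hi
        simp [Fin.last]
      obtain ⟨r, hr⟩ := hM _ _ hI
      exact ⟨r, (mem_rowsOf_singleton _ _ _ _).mp hr⟩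
    choose f hf using key
    have hinj : Function.Injective f := by
      intro s t h
      apply Fin.ext
      rw [← hf s, ← hf t, h]
    calc v = Fintype.card (Fin v) := (Fintype.card_fin v).symm
      _ ≤ Fintype.card (Fin N') := Fintype.card_le_of_injective f hinj
      _ = N' := Fintype.card_fin N'
end
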